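/- arXiv:1805.02521 — 5 statements merged into one kernel-verified Lean document; each statement's English description precedes it below -/
import Mathlib

section
/- Finiteness of the ground-state energy level in the subcritical range: for every real p with 2 < p < 6 and every μ > 0, the NLS energy E_p is bounded from below on H¹_μ(𝒢); in particular ℰ_p(μ) > −∞. -/
/- Formalization of NLS ground states on the two-dimensional grid 𝒢
   (the planar metric graph with vertex set ℤ×ℤ and unit edges).

   A function `u` on 𝒢 is encoded by the family `h j` of its restrictions to
   the horizontal lines `H j` and the family `w k` of its restrictions to the
   vertical lines `V k`, subject to the vertex-compatibility conditions
   `h j k = w k j`.  The (weak) derivative of `u` along each line is carried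
   as additional data `hd`, `wd`, tied to `h`, `w` by the fundamental theorem
   of calculus in the membership predicates below. -/

open MeasureTheory Filter Topology
open scoped ENNReal NNReal

noncomputable section

/-- A function on the grid 𝒢, together with candidate derivatives along
horizontal and vertical lines. -/
structure GridFunc where
  /-- restriction to the horizontal line `H j` -/
  h : ℤ → ℝ → ℝ
  /-- restriction to the vertical line `V k` -/
  w : ℤ → ℝ → ℝ
  /-- derivative along the horizontal line `H j` -/
  hd : ℤ → ℝ → ℝ
  /-- derivative along the vertical line `V k` -/
  wd : ℤ → ℝ → ℝ
  /-- vertex compatibility: the values at the vertex `(k, j)` agree -/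
  compat : ∀ j k : ℤ, h j (k : ℝ) = w k (j : ℝ)

/-- `∑_j ∫_ℝ |f j|^p + ∑_k ∫_ℝ |g k|^p`, as an extended nonnegative real:
the `p`-th power of the `L^p(𝒢)` norm of the function encoded by `(f, g)`. -/
def gridLpPow (p : ℝ) (f g : ℤ → ℝ → ℝ) : ℝ≥0∞ :=
  (∑' j : ℤ, ∫⁻ x : ℝ, (‖f j x‖₊ : ℝ≥0∞) ^ p) +
  (∑' k : ℤ, ∫⁻ y : ℝ, (‖g k y‖₊ : ℝ≥0∞) ^ p)

/-- The `L^p(𝒢)` norm of `u`. -/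
def GridFunc.lpNorm (u : GridFunc) (p : ℝ) : ℝ≥0∞ :=
  gridLpPow p u.h u.w ^ (1 / p)

/-- The `L^p(𝒢)` norm of the derivative `u'`. -/
def GridFunc.derivLpNorm (u : GridFunc) (p : ℝ) : ℝ≥0∞ :=
  gridLpPow p u.hd u.wd ^ (1 / p)

/-- The `L^∞(𝒢)` norm of `u`: the sup over all lines of the sup norms. -/
def GridFunc.linfNorm (u : GridFunc) : ℝ≥0∞ :=
  (⨆ j : ℤ, ⨆ x : ℝ, (‖u.h j x‖₊ : ℝ≥0∞)) ⊔
  (⨆ k : ℤ, ⨆ y : ℝ, (‖u.w k y‖₊ : ℝ≥0∞))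

/-- `u ∈ H¹(𝒢)`: every line restriction is continuous and is recovered from
its (locally integrable) derivative by integration, and both `‖u‖₂²` and
`‖u'‖₂²` are finite. -/
def GridFunc.MemH1 (u : GridFunc) : Prop :=
  (∀ j, Continuous (u.h j)) ∧ (∀ k, Continuous (u.w k)) ∧
  (∀ j, LocallyIntegrable (u.hd j)) ∧ (∀ k, LocallyIntegrable (u.wd k)) ∧
  (∀ j x, (∫ t in (0:ℝ)..x, u.hd j t) = u.h j x - u.h j 0) ∧
  (∀ k y, (∫ t in (0:ℝ)..y, u.wd k t) = u.w k y - u.w k 0) ∧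
  gridLpPow 2 u.h u.w < ⊤ ∧ gridLpPow 2 u.hd u.wd < ⊤

/-- `u ∈ W^{1,1}(𝒢)`: every line restriction is continuous and is recovered
from its (integrable) derivative by integration, and both `‖u‖₁` and `‖u'‖₁`
are finite. -/
def GridFunc.MemW11 (u : GridFunc) : Prop :=
  (∀ j, Continuous (u.h j)) ∧ (∀ k, Continuous (u.w k)) ∧
  (∀ j, Integrable (u.hd j)) ∧ (∀ k, Integrable (u.wd k)) ∧
  (∀ j x, (∫ t in (0:ℝ)..x, u.hd j t) = u.h j x - u.h j 0) ∧
  (∀ k y, (∫ t in (0:ℝ)..y, u.wd k t) = u.w k y - u.w k 0) ∧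
  gridLpPow 1 u.h u.w < ⊤ ∧ gridLpPow 1 u.hd u.wd < ⊤

/-- The mass `‖u‖_{L²(𝒢)}²` of `u`, as a real number. -/
def GridFunc.mass (u : GridFunc) : ℝ :=
  (gridLpPow 2 u.h u.w).toReal

/-- The NLS energy `E_p(u) = ½‖u'‖₂² − (1/p)‖u‖_p^p`. -/
def GridFunc.energy (u : GridFunc) (p : ℝ) : ℝ :=
  (1 / 2) * (gridLpPow 2 u.hd u.wd).toReal
    - (1 / p) * (gridLpPow p u.h u.w).toReal

/-- `u` is not identically zero on 𝒢. -/
def GridFunc.Nonzero (u : GridFunc) : Prop :=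
  (∃ j x, u.h j x ≠ 0) ∨ (∃ k y, u.w k y ≠ 0)

/-- The Gagliardo–Nirenberg quotient
`Q_p(u) = ‖u‖_p^p / (‖u‖₂^{p−2} ‖u'‖₂²)`. -/
def GridFunc.gnQuot (u : GridFunc) (p : ℝ) : ℝ :=
  (gridLpPow p u.h u.w).toReal /
    ((gridLpPow 2 u.h u.w).toReal ^ ((p - 2) / 2) *
      (gridLpPow 2 u.hd u.wd).toReal)

/-- The set of Gagliardo–Nirenberg quotients `Q_p(u)` over nontrivial
`u ∈ H¹(𝒢)`; its supremum is the optimal constant `K_p`. -/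
def gnSet (p : ℝ) : Set ℝ :=
  {q | ∃ u : GridFunc, u.MemH1 ∧ u.Nonzero ∧ q = u.gnQuot p}

/-- The critical mass `μ_p = (p/(2K))^{2/(p−2)}` associated with the optimal
Gagliardo–Nirenberg constant `K`. -/
def critMass (p K : ℝ) : ℝ :=
  (p / (2 * K)) ^ (2 / (p - 2))

/-- The `H¹(𝒢)` inner product `⟨u,v⟩_{L²(𝒢)} + ⟨u',v'⟩_{L²(𝒢)}`. -/
def GridFunc.h1Inner (u v : GridFunc) : ℝ :=
  ((∑' j : ℤ, ∫ x : ℝ, u.h j x * v.h j x) +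
    (∑' k : ℤ, ∫ y : ℝ, u.w k y * v.w k y)) +
  ((∑' j : ℤ, ∫ x : ℝ, u.hd j x * v.hd j x) +
    (∑' k : ℤ, ∫ y : ℝ, u.wd k y * v.wd k y))

/-- The set of energies `E_p(u)` of functions `u ∈ H¹_μ(𝒢)`; its infimum is
the ground-state energy level `ℰ_p(μ)`. -/
def energySet (p μ : ℝ) : Set ℝ :=
  {e | ∃ u : GridFunc, u.MemH1 ∧ u.mass = μ ∧ u.energy p = e}

/-- `u` is a ground state of mass `μ`: it belongs to `H¹_μ(𝒢)` and minimizes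
the energy `E_p` there. -/
def IsGroundState (p μ : ℝ) (u : GridFunc) : Prop :=
  u.MemH1 ∧ u.mass = μ ∧
    ∀ v : GridFunc, v.MemH1 → v.mass = μ → u.energy p ≤ v.energy p

end

noncomputable section

lemma nn_sq_eq (f : ℝ → ℝ) (x : ℝ) :
    (‖f x‖₊ : ℝ≥0∞) ^ (2:ℝ) = ENNReal.ofReal (f x ^ 2) := by
  rw [← enorm_eq_nnnorm, Real.enorm_eq_ofReal_abs,
    ENNReal.ofReal_rpow_of_nonneg (abs_nonneg _) (by norm_num : (0:ℝ) ≤ 2)]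
  congr 1
  rw [show ((2:ℝ)) = ((2:ℕ):ℝ) by norm_num, Real.rpow_natCast]
  exact sq_abs _

lemma line_bound (f g : ℝ → ℝ) (hf : Continuous f)
    (hg : MeasureTheory.LocallyIntegrable g)
    (hftc : ∀ x, (∫ t in (0:ℝ)..x, g t) = f x - f 0)
    {a b L : ℝ} (ha : 0 ≤ a) (hb : 0 ≤ b) (hL : 0 < L)
    (hfa : (∫⁻ x : ℝ, (‖f x‖₊ : ℝ≥0∞) ^ (2:ℝ)) ≤ ENNReal.ofReal a)
    (hgb : (∫⁻ x : ℝ, (‖g x‖₊ : ℝ≥0∞) ^ (2:ℝ)) ≤ ENNReal.ofReal b) :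
    ∀ x : ℝ, f x ^ 2 ≤ 2 * (a / L + L * b) := by
  intro x
  -- find a near-minimum point y in [x-L, x]
  obtain ⟨y, hy, hymin⟩ := (isCompact_Icc (a := x - L) (b := x)).exists_isMinOn
    (Set.nonempty_Icc.2 (by linarith)) ((hf.pow 2).continuousOn)
  have hyx : y ≤ x := hy.2
  -- f y ^ 2 * L ≤ a
  have hfy2 : f y ^ 2 ≤ a / L := by
    have h1 : ENNReal.ofReal (f y ^ 2 * L) ≤ ENNReal.ofReal a := by
      have e1 : ENNReal.ofReal (f y ^ 2 * L)
          = ∫⁻ _ in Set.Icc (x - L) x, ENNReal.ofReal (f y ^ 2) := by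
        rw [setLIntegral_const, Real.volume_Icc]
        rw [← ENNReal.ofReal_mul (by positivity)]
        congr 1; ring_nf
      rw [e1]
      calc (∫⁻ _ in Set.Icc (x - L) x, ENNReal.ofReal (f y ^ 2))
          ≤ ∫⁻ z in Set.Icc (x - L) x, ENNReal.ofReal (f z ^ 2) := by
            refine setLIntegral_mono ((ENNReal.continuous_ofReal.comp (hf.pow 2)).measurable) ?_
            exact fun z hz => ENNReal.ofReal_le_ofReal (hymin hz)
        _ ≤ ∫⁻ z, ENNReal.ofReal (f z ^ 2) := setLIntegral_le_lintegral _ _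
        _ ≤ ENNReal.ofReal a := by
            simpa only [nn_sq_eq] using hfa
    have := (ENNReal.ofReal_le_ofReal_iff ha).1 h1
    rw [le_div_iff₀ hL]; linarith [this]
  -- interval integrability of g
  have hgi : ∀ u v : ℝ, IntervalIntegrable g volume u v := fun u v => by
    rw [intervalIntegrable_iff]
    exact (hg.integrableOn_isCompact isCompact_uIcc).mono_set Set.uIoc_subset_uIcc
  -- f x - f y = ∫ y..x g
  have hkey : f x - f y = ∫ t in y..x, g t := by
    have := intervalIntegral.integral_interval_sub_left (hgi 0 x) (hgi 0 y)
    rw [hftc x, hftc y] at this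
    rw [← this]; ring
  -- bound the integral of |g| over [y,x] by sqrt (L * b)
  have hCS : |∫ t in y..x, g t| ≤ Real.sqrt (L * b) := by
    have h2 : |∫ t in y..x, g t| ≤ ∫ t in y..x, |g t| :=
      intervalIntegral.abs_integral_le_integral_abs hyx
    have h3 : (∫ t in y..x, |g t|) = (∫⁻ z in Set.Ioc y x, (‖g z‖₊ : ℝ≥0∞)).toReal := by
      rw [intervalIntegral.integral_of_le hyx]
      simp only [← Real.norm_eq_abs]
      rw [integral_eq_lintegral_of_nonneg_ae (Filter.Eventually.of_forall fun z => norm_nonneg _)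
        (hg.aestronglyMeasurable.norm.restrict)]
      congr 1
      refine lintegral_congr fun z => ?_
      rw [ofReal_norm, enorm_eq_nnnorm]
    have h4 : (∫⁻ z in Set.Ioc y x, (‖g z‖₊ : ℝ≥0∞))
        ≤ ENNReal.ofReal b ^ ((1:ℝ)/2) * ENNReal.ofReal L ^ ((1:ℝ)/2) := by
      have hconj : Real.HolderConjugate 2 2 := Real.HolderConjugate.two_two
      have := ENNReal.lintegral_mul_le_Lp_mul_Lq (volume.restrict (Set.Ioc y x)) hconj
        (hg.aestronglyMeasurable.enorm.restrict) (aemeasurable_const (b := (1:ℝ≥0∞)))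
      simp only [Pi.mul_apply, mul_one, one_mul, ENNReal.one_rpow, lintegral_const,
        Measure.restrict_apply MeasurableSet.univ, Set.univ_inter, lintegral_one] at this
      refine this.trans ?_
      gcongr
      · calc (∫⁻ z in Set.Ioc y x, (‖g z‖₊ : ℝ≥0∞) ^ (2:ℝ))
            ≤ ∫⁻ z, (‖g z‖₊ : ℝ≥0∞) ^ (2:ℝ) := setLIntegral_le_lintegral _ _
          _ ≤ ENNReal.ofReal b := hgb
      · rw [Real.volume_Ioc]
        exact ENNReal.ofReal_le_ofReal (by linarith [hy.1])
    have h5 : (∫⁻ z in Set.Ioc y x, (‖g z‖₊ : ℝ≥0∞)).toReal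
        ≤ b ^ ((1:ℝ)/2) * L ^ ((1:ℝ)/2) := by
      have : ENNReal.ofReal b ^ ((1:ℝ)/2) * ENNReal.ofReal L ^ ((1:ℝ)/2)
          = ENNReal.ofReal (b ^ ((1:ℝ)/2) * L ^ ((1:ℝ)/2)) := by
        rw [ENNReal.ofReal_rpow_of_nonneg hb (by norm_num),
          ENNReal.ofReal_rpow_of_nonneg hL.le (by norm_num),
          ENNReal.ofReal_mul (by positivity)]
      exact ENNReal.toReal_le_of_le_ofReal (by positivity) (this ▸ h4)
    have h6 : b ^ ((1:ℝ)/2) * L ^ ((1:ℝ)/2) = Real.sqrt (L * b) := by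
      rw [Real.sqrt_eq_rpow, Real.mul_rpow hL.le hb, mul_comm]
    linarith [h2, h3 ▸ h5, h6 ▸ h5]
  -- combine
  have hs : Real.sqrt (L * b) ^ 2 = L * b := Real.sq_sqrt (by positivity)
  have h7 : (f x - f y) ^ 2 ≤ L * b := by
    rw [hkey, ← hs]
    exact sq_le_sq' (by linarith [abs_le.1 hCS]) (by linarith [abs_le.1 hCS])
  have h8 : f y ^ 2 ≤ a / L := hfy2
  nlinarith [sq_nonneg (f x - 2 * f y)]

lemma nn_rpow_eq (f : ℝ → ℝ) (x q : ℝ) (hq : 0 ≤ q) :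
    (‖f x‖₊ : ℝ≥0∞) ^ q = ENNReal.ofReal (|f x| ^ q) := by
  rw [← enorm_eq_nnnorm, Real.enorm_eq_ofReal_abs, ENNReal.ofReal_rpow_of_nonneg (abs_nonneg _) hq]

lemma lp_line_bound (f : ℝ → ℝ) (p N : ℝ) (hp : 2 ≤ p) (hN : 0 ≤ N)
    (hfb : ∀ x, f x ^ 2 ≤ N) :
    (∫⁻ x : ℝ, (‖f x‖₊ : ℝ≥0∞) ^ p)
      ≤ ENNReal.ofReal (N ^ ((p-2)/2)) * ∫⁻ x : ℝ, (‖f x‖₊ : ℝ≥0∞) ^ (2:ℝ) := by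
  rw [← lintegral_const_mul' _ _ ENNReal.ofReal_ne_top]
  refine lintegral_mono fun x => ?_
  rw [nn_rpow_eq f x p (by linarith), nn_sq_eq,
    ← ENNReal.ofReal_mul (by positivity)]
  refine ENNReal.ofReal_le_ofReal ?_
  have habs : (0:ℝ) ≤ |f x| := abs_nonneg _
  have h1 : |f x| ^ p = |f x| ^ (p - 2) * |f x| ^ (2:ℝ) := by
    rw [← Real.rpow_add_of_nonneg habs (by linarith) (by norm_num)]
    norm_num
  have h2 : |f x| ^ (p - 2) ≤ N ^ ((p-2)/2) := by
    have e : |f x| ^ (p - 2) = (|f x| ^ 2) ^ ((p-2)/2) := by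
      rw [← Real.rpow_natCast |f x| 2, ← Real.rpow_mul habs]
      congr 1; ring
    rw [e]
    exact Real.rpow_le_rpow (by positivity) (by rw [sq_abs]; exact hfb x) (by linarith)
  have h3 : |f x| ^ (2:ℝ) = f x ^ 2 := by
    rw [show ((2:ℝ)) = ((2:ℕ):ℝ) by norm_num, Real.rpow_natCast]
    exact sq_abs _
  rw [h1, h3]
  exact mul_le_mul_of_nonneg_right h2 (sq_nonneg _)

lemma elem_bound (q C : ℝ) (hq0 : 0 < q) (hq2 : q < 2) (hC : 0 ≤ C) :
    ∃ c : ℝ, ∀ t : ℝ, 0 ≤ t → c ≤ (1/2) * t^2 - C * (t+1) ^ q := by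
  set S : ℝ := max 1 ((4*C) ^ (1/(2-q))) with hS
  refine ⟨min (-(1/2)) (-(C * S ^ q)), fun t ht => ?_⟩
  set s := t + 1 with hs
  have hs1 : (1:ℝ) ≤ s := by simp [hs]; linarith
  have hs0 : (0:ℝ) < s := by linarith
  by_cases hcase : s ≤ S
  · have h1 : C * s ^ q ≤ C * S ^ q :=
      mul_le_mul_of_nonneg_left (Real.rpow_le_rpow hs0.le hcase hq0.le) hC
    have h2 : 0 ≤ (1/2) * t^2 := by positivity
    calc min (-(1/2)) (-(C * S ^ q)) ≤ -(C * S ^ q) := min_le_right _ _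
      _ ≤ (1/2)*t^2 - C * s ^ q := by linarith
  · push_neg at hcase
    have hSrq : 4 * C ≤ s ^ (2 - q) := by
      have h0 : (4*C) ^ (1/(2-q)) ≤ S := le_max_right _ _
      have h2 : ((4*C) ^ (1/(2-q))) ^ (2-q) ≤ s ^ (2-q) :=
        Real.rpow_le_rpow (Real.rpow_nonneg (by positivity) _) (h0.trans hcase.le) (by linarith)
      rwa [← Real.rpow_mul (by positivity), one_div,
        inv_mul_cancel₀ (by linarith : (2:ℝ)-q ≠ 0), Real.rpow_one] at h2
    have hsq : s ^ q * s ^ (2 - q) = s ^ 2 := by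
      rw [← Real.rpow_add hs0, show q + (2-q) = ((2:ℕ):ℝ) by push_cast; ring,
        Real.rpow_natCast]
    have hq0' : (0:ℝ) ≤ s ^ q := Real.rpow_nonneg hs0.le _
    have h3 : s ^ q * (4 * C) ≤ s ^ 2 :=
      (mul_le_mul_of_nonneg_left hSrq hq0').trans_eq hsq
    have h4 : C * s ^ q ≤ s ^ 2 / 4 := by nlinarith
    have hs2 : s^2 = t^2 + 2*t + 1 := by rw [hs]; ring
    calc min (-(1/2)) (-(C * S ^ q)) ≤ -(1/2) := min_le_left _ _
      _ ≤ (1/2)*t^2 - C * s ^ q := by nlinarith [h4, hs2, sq_nonneg (t-1)]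

/-- **Finiteness of the ground-state energy level in the subcritical range**:
for `2 < p < 6` and `μ > 0`, the NLS energy `E_p` is bounded from below on
`H¹_μ(𝒢)`; in particular `ℰ_p(μ) > −∞`. -/
theorem grid_energy_bddBelow (p μ : ℝ) (hp₂ : 2 < p) (hp₆ : p < 6) (hμ : 0 < μ) :
    ∃ c : ℝ, ∀ u : GridFunc, u.MemH1 → u.mass = μ → c ≤ u.energy p := by
  have hp0 : 0 < p := by linarith
  set q : ℝ := (p - 2) / 2 with hq
  have hq0 : 0 < q := by rw [hq]; linarith
  have hq2 : q < 2 := by rw [hq]; linarith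
  set C : ℝ := (1/p) * μ * (4 * Real.sqrt μ) ^ q with hCdef
  have hsμ : 0 < Real.sqrt μ := Real.sqrt_pos.2 hμ
  have hC : 0 ≤ C := by
    have := Real.rpow_nonneg (by positivity : (0:ℝ) ≤ 4 * Real.sqrt μ) q
    positivity
  obtain ⟨c, hc⟩ := elem_bound q C hq0 hq2 hC
  refine ⟨c, fun u hu hmass => ?_⟩
  obtain ⟨hch, hcw, hlh, hlw, hfth, hftw, hfin2, hfind⟩ := hu
  set t : ℝ := Real.sqrt (gridLpPow 2 u.hd u.wd).toReal with htdef
  have ht : 0 ≤ t := Real.sqrt_nonneg _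
  have ht2 : (gridLpPow 2 u.hd u.wd).toReal = t ^ 2 :=
    (Real.sq_sqrt ENNReal.toReal_nonneg).symm
  have hTot : gridLpPow 2 u.h u.w = ENNReal.ofReal μ := by
    rw [← hmass]
    exact (ENNReal.ofReal_toReal hfin2.ne).symm
  have hD : gridLpPow 2 u.hd u.wd = ENNReal.ofReal (t ^ 2) := by
    rw [← ht2]
    exact (ENNReal.ofReal_toReal hfind.ne).symm
  set L : ℝ := Real.sqrt μ / (t + 1) with hLdef
  have hL : 0 < L := by positivity
  set N : ℝ := 2 * (μ / L + L * t ^ 2) with hNdef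
  have hN : 0 ≤ N := by positivity
  -- per-line L² bounds
  have hlineh : ∀ j : ℤ, (∫⁻ x : ℝ, (‖u.h j x‖₊ : ℝ≥0∞) ^ (2:ℝ)) ≤ ENNReal.ofReal μ := by
    intro j
    refine le_trans ?_ hTot.le
    exact le_trans (ENNReal.le_tsum j) le_self_add
  have hlinew : ∀ k : ℤ, (∫⁻ y : ℝ, (‖u.w k y‖₊ : ℝ≥0∞) ^ (2:ℝ)) ≤ ENNReal.ofReal μ := by
    intro k
    refine le_trans ?_ hTot.le
    exact le_trans (ENNReal.le_tsum k) le_add_self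
  have hlinehd : ∀ j : ℤ, (∫⁻ x : ℝ, (‖u.hd j x‖₊ : ℝ≥0∞) ^ (2:ℝ)) ≤ ENNReal.ofReal (t^2) := by
    intro j
    refine le_trans ?_ hD.le
    exact le_trans (ENNReal.le_tsum j) le_self_add
  have hlinewd : ∀ k : ℤ, (∫⁻ y : ℝ, (‖u.wd k y‖₊ : ℝ≥0∞) ^ (2:ℝ)) ≤ ENNReal.ofReal (t^2) := by
    intro k
    refine le_trans ?_ hD.le
    exact le_trans (ENNReal.le_tsum k) le_add_self
  -- pointwise sup bounds on each line
  have hsuph : ∀ j : ℤ, ∀ x : ℝ, u.h j x ^ 2 ≤ N := fun j =>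
    line_bound (u.h j) (u.hd j) (hch j) (hlh j) (hfth j) hμ.le (sq_nonneg t) hL
      (hlineh j) (hlinehd j)
  have hsupw : ∀ k : ℤ, ∀ y : ℝ, u.w k y ^ 2 ≤ N := fun k =>
    line_bound (u.w k) (u.wd k) (hcw k) (hlw k) (hftw k) hμ.le (sq_nonneg t) hL
      (hlinew k) (hlinewd k)
  -- Lᵖ bound
  have hKnn : 0 ≤ N ^ ((p-2)/2) := Real.rpow_nonneg hN _
  have hLp : gridLpPow p u.h u.w ≤ ENNReal.ofReal (N ^ ((p-2)/2) * μ) := by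
    rw [gridLpPow, ENNReal.ofReal_mul hKnn, ← hTot, gridLpPow, mul_add,
      ← ENNReal.tsum_mul_left, ← ENNReal.tsum_mul_left]
    refine add_le_add (ENNReal.tsum_le_tsum fun j => ?_) (ENNReal.tsum_le_tsum fun k => ?_)
    · exact lp_line_bound (u.h j) p N hp₂.le hN (hsuph j)
    · exact lp_line_bound (u.w k) p N hp₂.le hN (hsupw k)
  have hLpR : (gridLpPow p u.h u.w).toReal ≤ N ^ ((p-2)/2) * μ :=
    ENNReal.toReal_le_of_le_ofReal (by positivity) hLp
  -- bound N by 4 √μ (t+1)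
  have hNle : N ≤ 4 * Real.sqrt μ * (t + 1) := by
    have h1 : μ / L = Real.sqrt μ * (t + 1) := by
      rw [hLdef, div_div_eq_mul_div, div_eq_iff (by positivity : Real.sqrt μ ≠ 0)]
      rw [mul_comm (Real.sqrt μ) (t+1), mul_assoc, Real.mul_self_sqrt hμ.le]
      ring
    have h2 : L * t ^ 2 ≤ Real.sqrt μ * (t + 1) := by
      rw [hLdef, div_mul_eq_mul_div, div_le_iff₀ (by positivity : (0:ℝ) < t + 1)]
      have : t ^ 2 ≤ (t + 1) ^ 2 := by nlinarith
      nlinarith [hsμ.le]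
    rw [hNdef]; linarith
  have hKle : N ^ ((p-2)/2) ≤ (4 * Real.sqrt μ) ^ q * (t + 1) ^ q := by
    have h0 := Real.rpow_le_rpow hN hNle hq0.le
    have h1 : (4 * Real.sqrt μ * (t + 1)) ^ ((p-2)/2)
        = (4 * Real.sqrt μ) ^ q * (t + 1) ^ q := by
      rw [hq]
      exact Real.mul_rpow (by positivity) (by linarith)
    linarith
  -- conclude
  have henergy : u.energy p = (1/2) * t ^ 2 - (1/p) * (gridLpPow p u.h u.w).toReal := by
    rw [GridFunc.energy, ht2]
  have hfinal : (1/p) * (gridLpPow p u.h u.w).toReal ≤ C * (t + 1) ^ q := by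
    have h1 : (1/p) * (gridLpPow p u.h u.w).toReal ≤ (1/p) * (N ^ ((p-2)/2) * μ) :=
      mul_le_mul_of_nonneg_left hLpR (by positivity)
    have h2 : (1/p) * (N ^ ((p-2)/2) * μ) ≤ (1/p) * ((4 * Real.sqrt μ) ^ q * (t + 1) ^ q * μ) := by
      refine mul_le_mul_of_nonneg_left ?_ (by positivity)
      exact mul_le_mul_of_nonneg_right hKle hμ.le
    have h3 : (1/p) * ((4 * Real.sqrt μ) ^ q * (t + 1) ^ q * μ) = C * (t + 1) ^ q := by
      rw [hCdef]; ring
    linarith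
  rw [henergy]
  calc c ≤ (1/2) * t ^ 2 - C * (t + 1) ^ q := hc t ht
    _ ≤ (1/2) * t ^ 2 - (1/p) * (gridLpPow p u.h u.w).toReal := by linarith


end
end

section
/- Exponential test functions on the grid: for μ > 0 and ε > 0, let κ_ε = ((εμ/2)·(1−e^{−2ε})/(1+e^{−2ε}))^{1/2} and let u_ε be the function on 𝒢 whose restriction to the horizontal line H_j is x ↦ κ_ε e^{−ε(|x|+|j|)} and whose restriction to the vertical line V_k is y ↦ κ_ε e^{−ε(|k|+|y|)}. Then u_ε ∈ H¹(𝒢), ‖u_ε‖_{L²(𝒢)}² = μ, and ‖u_ε'‖_{L²(𝒢)}² = ε²μ. -/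
/- Formalization of NLS ground states on the two-dimensional grid 𝒢
   (the planar metric graph with vertex set ℤ×ℤ and unit edges).

   A function `u` on 𝒢 is encoded by the family `h j` of its restrictions to
   the horizontal lines `H j` and the family `w k` of its restrictions to the
   vertical lines `V k`, subject to the vertex-compatibility conditions
   `h j k = w k j`.  The (weak) derivative of `u` along each line is carried
   as additional data `hd`, `wd`, tied to `h`, `w` by the fundamental theorem
   of calculus in the membership predicates below. -/

open MeasureTheory Filter Topology
open scoped ENNReal NNReal

noncomputable section

/-- The normalization constant
`κ_ε = ((εμ/2)·(1−e^{−2ε})/(1+e^{−2ε}))^{1/2}`. -/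
def kappa (μ ε : ℝ) : ℝ :=
  Real.sqrt (ε * μ / 2 * ((1 - Real.exp (-2 * ε)) / (1 + Real.exp (-2 * ε))))

/-- The exponential test function `u_ε` on 𝒢, whose restriction to `H j` is
`x ↦ κ_ε e^{−ε(|x|+|j|)}` and whose restriction to `V k` is
`y ↦ κ_ε e^{−ε(|k|+|y|)}`. -/
def expTest (μ ε : ℝ) : GridFunc where
  h := fun j x => kappa μ ε * Real.exp (-ε * (|x| + |(j : ℝ)|))
  w := fun k y => kappa μ ε * Real.exp (-ε * (|(k : ℝ)| + |y|))
  hd := fun j x => kappa μ ε * (-ε * Real.sign x) * Real.exp (-ε * (|x| + |(j : ℝ)|))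
  wd := fun k y => kappa μ ε * (-ε * Real.sign y) * Real.exp (-ε * (|(k : ℝ)| + |y|))
  compat := fun _ _ => rfl


section GridHelpers

open Real MeasureTheory Set

lemma aux_integral_exp_neg_Ioi {b : ℝ} (hb : 0 < b) :
    ∫ x in Set.Ioi (0:ℝ), Real.exp (-b * x) = 1 / b := by
  have h := integral_comp_mul_left_Ioi (fun y => Real.exp (-y)) 0 hb
  simp only [mul_zero, integral_exp_neg_Ioi_zero, smul_eq_mul, mul_one] at h
  simp_rw [neg_mul]
  rw [h, one_div]

lemma aux_integrable_exp_abs {b : ℝ} (hb : 0 < b) :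
    Integrable (fun x : ℝ => Real.exp (-b * |x|)) := by
  have hIoi : IntegrableOn (fun x : ℝ => Real.exp (-b * |x|)) (Set.Ioi 0) := by
    refine (exp_neg_integrableOn_Ioi 0 hb).congr_fun (fun x hx => ?_) measurableSet_Ioi
    rw [abs_of_pos hx]
  have hIic : IntegrableOn (fun x : ℝ => Real.exp (-b * |x|)) (Set.Iic 0) := by
    rw [← Measure.map_neg_eq_self (volume : Measure ℝ)]
    have m : MeasurableEmbedding fun x : ℝ => -x :=
      (Homeomorph.neg ℝ).measurableEmbedding
    rw [m.integrableOn_map_iff]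
    simp_rw [Function.comp_def, abs_neg, neg_preimage, neg_Iic, neg_zero]
    exact (integrableOn_Ici_iff_integrableOn_Ioi).mpr hIoi
  have h := hIic.union hIoi
  rwa [Set.Iic_union_Ioi, integrableOn_univ] at h

lemma aux_integral_exp_abs {b : ℝ} (hb : 0 < b) :
    ∫ x : ℝ, Real.exp (-b * |x|) = 2 / b := by
  rw [integral_comp_abs (f := fun x => Real.exp (-b * x)), aux_integral_exp_neg_Ioi hb]
  ring

lemma aux_nnnorm_sq (r : ℝ) : (‖r‖₊ : ℝ≥0∞) ^ (2:ℝ) = ENNReal.ofReal (r ^ 2) := by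
  rw [← enorm_eq_nnnorm, ← ofReal_norm,
    ENNReal.ofReal_rpow_of_nonneg (norm_nonneg r) (by norm_num : (0:ℝ) ≤ 2),
    Real.rpow_two, Real.norm_eq_abs, sq_abs]

lemma aux_lint_row {b : ℝ} (C : ℝ) (hb : 0 < b) :
    ∫⁻ x : ℝ, ENNReal.ofReal ((C * Real.exp (-b * |x|)) ^ 2) = ENNReal.ofReal (C ^ 2 / b) := by
  have hfun : ∀ x : ℝ, (C * Real.exp (-b * |x|)) ^ 2
      = C ^ 2 * Real.exp (-(2*b) * |x|) := by
    intro x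
    rw [mul_pow, pow_two (Real.exp _), ← Real.exp_add,
      show (-b * |x|) + (-b * |x|) = -(2*b) * |x| by ring]
  simp_rw [hfun]
  have h2b : (0:ℝ) < 2 * b := by linarith
  have hint : Integrable (fun x : ℝ => C ^ 2 * Real.exp (-(2*b) * |x|)) :=
    (aux_integrable_exp_abs h2b).const_mul _
  rw [← MeasureTheory.ofReal_integral_eq_lintegral_ofReal hint
      (Filter.Eventually.of_forall fun x => by positivity)]
  rw [integral_const_mul, aux_integral_exp_abs h2b]
  congr 1
  field_simp

lemma aux_hasSum {b : ℝ} (hb : 0 < b) :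
    HasSum (fun j : ℤ => Real.exp (-b * |(j:ℝ)|))
      ((1 + Real.exp (-b)) / (1 - Real.exp (-b))) := by
  set r := Real.exp (-b) with hr
  have hr0 : 0 ≤ r := (Real.exp_pos _).le
  have hr1 : r < 1 := Real.exp_lt_one_iff.mpr (by linarith)
  have hgeo := hasSum_geometric_of_lt_one hr0 hr1
  have e1 : (fun n : ℕ => Real.exp (-b * |((n : ℤ) : ℝ)|)) = fun n : ℕ => r ^ n := by
    funext n
    push_cast
    rw [abs_of_nonneg (Nat.cast_nonneg n), hr, ← Real.exp_nat_mul]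
    congr 1; ring
  have h1 : HasSum (fun n : ℕ => Real.exp (-b * |((n : ℤ) : ℝ)|)) (1 - r)⁻¹ := by
    rw [e1]; exact hgeo
  have e2 : (fun n : ℕ => Real.exp (-b * |((-((n:ℕ):ℤ) - 1 : ℤ) : ℝ)|))
      = fun n : ℕ => r * r ^ n := by
    funext n
    push_cast
    rw [show (-(n:ℝ) - 1) = -((n:ℝ) + 1) by ring, abs_neg,
      abs_of_nonneg (by positivity : (0:ℝ) ≤ (n:ℝ) + 1), hr,
      ← Real.exp_nat_mul, ← Real.exp_add]
    congr 1; ring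
  have h2 : HasSum (fun n : ℕ => Real.exp (-b * |(((-((n:ℕ)+1) : ℤ)) : ℝ)|))
      (r * (1 - r)⁻¹) := by
    have : (fun n : ℕ => Real.exp (-b * |(((-((n:ℕ)+1) : ℤ)) : ℝ)|))
        = fun n : ℕ => Real.exp (-b * |((-((n:ℕ):ℤ) - 1 : ℤ) : ℝ)|) := by
      funext n; congr 2; push_cast; ring
    rw [this, e2]
    exact hgeo.mul_left r
  have hsum := HasSum.of_nat_of_neg_add_one (f := fun j : ℤ => Real.exp (-b * |(j:ℝ)|)) h1 h2
  have h1r : (1:ℝ) - r ≠ 0 := by intro h; nlinarith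
  have heq : (1 + r) / (1 - r) = (1 - r)⁻¹ + r * (1 - r)⁻¹ := by
    field_simp
  rw [heq]
  exact hsum

lemma aux_tsum_row {b D : ℝ} (hb : 0 < b) (hD : 0 ≤ D) :
    ∑' j : ℤ, ENNReal.ofReal (D * Real.exp (-b * |(j:ℝ)|))
      = ENNReal.ofReal (D * ((1 + Real.exp (-b)) / (1 - Real.exp (-b)))) := by
  have hs := (aux_hasSum hb).mul_left D
  rw [← ENNReal.ofReal_tsum_of_nonneg (fun j => by positivity) hs.summable, hs.tsum_eq]

lemma aux_line_h {κ ε : ℝ} (a : ℝ) (hε : 0 < ε) :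
    ∫⁻ x : ℝ, (‖κ * Real.exp (-ε * (|x| + a))‖₊ : ℝ≥0∞) ^ (2:ℝ)
      = ENNReal.ofReal (κ ^ 2 / ε * Real.exp (-(2*ε) * a)) := by
  have e1 : ∀ x : ℝ, κ * Real.exp (-ε * (|x| + a))
      = (κ * Real.exp (-ε * a)) * Real.exp (-ε * |x|) := by
    intro x
    rw [show -ε * (|x| + a) = -ε * |x| + -ε * a by ring, Real.exp_add]
    ring
  calc ∫⁻ x : ℝ, (‖κ * Real.exp (-ε * (|x| + a))‖₊ : ℝ≥0∞) ^ (2:ℝ)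
      = ∫⁻ x : ℝ, ENNReal.ofReal (((κ * Real.exp (-ε * a)) * Real.exp (-ε * |x|)) ^ 2) := by
        refine lintegral_congr fun x => ?_
        rw [e1 x, aux_nnnorm_sq]
    _ = ENNReal.ofReal ((κ * Real.exp (-ε * a)) ^ 2 / ε) := aux_lint_row _ hε
    _ = ENNReal.ofReal (κ ^ 2 / ε * Real.exp (-(2*ε) * a)) := by
        congr 1
        rw [mul_pow, pow_two (Real.exp _), ← Real.exp_add,
          show -ε * a + -ε * a = -(2*ε) * a by ring]
        ring

lemma aux_line_h' {κ ε : ℝ} (a : ℝ) (hε : 0 < ε) :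
    ∫⁻ y : ℝ, (‖κ * Real.exp (-ε * (a + |y|))‖₊ : ℝ≥0∞) ^ (2:ℝ)
      = ENNReal.ofReal (κ ^ 2 / ε * Real.exp (-(2*ε) * a)) := by
  simp_rw [add_comm a]
  exact aux_line_h a hε

lemma aux_line_hd {κ ε : ℝ} (a : ℝ) (hε : 0 < ε) :
    ∫⁻ x : ℝ, (‖κ * (-ε * Real.sign x) * Real.exp (-ε * (|x| + a))‖₊ : ℝ≥0∞) ^ (2:ℝ)
      = ENNReal.ofReal (κ ^ 2 * ε * Real.exp (-(2*ε) * a)) := by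
  have hae : ∀ᵐ x : ℝ, x ≠ 0 := by
    have h0 : (volume : Measure ℝ) {(0:ℝ)} = 0 := measure_singleton 0
    filter_upwards [measure_eq_zero_iff_ae_notMem.mp h0] with x hx
    simpa using hx
  calc ∫⁻ x : ℝ, (‖κ * (-ε * Real.sign x) * Real.exp (-ε * (|x| + a))‖₊ : ℝ≥0∞) ^ (2:ℝ)
      = ∫⁻ x : ℝ, ENNReal.ofReal (((κ * ε * Real.exp (-ε * a)) * Real.exp (-ε * |x|)) ^ 2) := by
        refine lintegral_congr_ae ?_
        filter_upwards [hae] with x hx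
        rw [aux_nnnorm_sq]
        congr 1
        have hsq : Real.sign x ^ 2 = 1 := by
          rcases lt_or_gt_of_ne hx with h | h
          · rw [Real.sign_of_neg h]; norm_num
          · rw [Real.sign_of_pos h]; norm_num
        have hE : Real.exp (-ε * (|x| + a)) = Real.exp (-ε * |x|) * Real.exp (-ε * a) := by
          rw [← Real.exp_add]; congr 1; ring
        rw [hE]
        nlinarith [hsq]
    _ = ENNReal.ofReal ((κ * ε * Real.exp (-ε * a)) ^ 2 / ε) := aux_lint_row _ hε
    _ = ENNReal.ofReal (κ ^ 2 * ε * Real.exp (-(2*ε) * a)) := by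
        congr 1
        rw [mul_pow, mul_pow, pow_two (Real.exp _), ← Real.exp_add,
          show -ε * a + -ε * a = -(2*ε) * a by ring]
        field_simp

lemma aux_line_hd' {κ ε : ℝ} (a : ℝ) (hε : 0 < ε) :
    ∫⁻ y : ℝ, (‖κ * (-ε * Real.sign y) * Real.exp (-ε * (a + |y|))‖₊ : ℝ≥0∞) ^ (2:ℝ)
      = ENNReal.ofReal (κ ^ 2 * ε * Real.exp (-(2*ε) * a)) := by
  simp_rw [add_comm a]
  exact aux_line_hd a hε

lemma aux_measurable_sign : Measurable Real.sign := by
  unfold Real.sign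
  refine Measurable.ite ?_ measurable_const (Measurable.ite ?_ measurable_const measurable_const)
  · exact measurableSet_lt measurable_id measurable_const
  · exact measurableSet_lt measurable_const measurable_id

lemma aux_abs_sign_le (x : ℝ) : |Real.sign x| ≤ 1 := by
  rcases lt_trichotomy x 0 with h | h | h
  · rw [Real.sign_of_neg h]; norm_num
  · rw [h, Real.sign_zero]; norm_num
  · rw [Real.sign_of_pos h]; norm_num

lemma aux_integrable_hd {κ ε : ℝ} (a : ℝ) (hε : 0 < ε) :
    Integrable (fun x : ℝ => κ * (-ε * Real.sign x) * Real.exp (-ε * (|x| + a))) := by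
  have hmeas : Measurable fun x : ℝ =>
      κ * (-ε * Real.sign x) * Real.exp (-ε * (|x| + a)) := by
    refine Measurable.mul ?_ ?_
    · exact (aux_measurable_sign.const_mul (-ε)).const_mul κ
    · exact (Real.continuous_exp.comp
        (continuous_const.mul (continuous_abs.add continuous_const))).measurable
  refine Integrable.mono' (g := fun x : ℝ => (|κ| * ε * Real.exp (-ε * a)) * Real.exp (-ε * |x|))
    ((aux_integrable_exp_abs hε).const_mul _) hmeas.aestronglyMeasurable
    (Filter.Eventually.of_forall fun x => ?_)
  have hE : Real.exp (-ε * (|x| + a)) = Real.exp (-ε * |x|) * Real.exp (-ε * a) := by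
    rw [← Real.exp_add]; congr 1; ring
  show |κ * (-ε * Real.sign x) * Real.exp (-ε * (|x| + a))|
      ≤ |κ| * ε * Real.exp (-ε * a) * Real.exp (-ε * |x|)
  rw [hE]
  have habs : |κ * (-ε * Real.sign x) * (Real.exp (-ε * |x|) * Real.exp (-ε * a))|
      = |κ| * (|(-ε)| * |Real.sign x|) * (|Real.exp (-ε * |x|)| * |Real.exp (-ε * a)|) := by
    simp [abs_mul]
  rw [habs, abs_neg, abs_of_pos hε, abs_of_pos (Real.exp_pos _), abs_of_pos (Real.exp_pos _)]
  have hs := aux_abs_sign_le x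
  calc |κ| * (ε * |Real.sign x|) * (Real.exp (-ε * |x|) * Real.exp (-ε * a))
      ≤ |κ| * (ε * 1) * (Real.exp (-ε * |x|) * Real.exp (-ε * a)) := by
        gcongr
    _ = |κ| * ε * Real.exp (-ε * a) * Real.exp (-ε * |x|) := by ring

lemma aux_integrable_hd' {κ ε : ℝ} (a : ℝ) (hε : 0 < ε) :
    Integrable (fun y : ℝ => κ * (-ε * Real.sign y) * Real.exp (-ε * (a + |y|))) := by
  simp_rw [add_comm a]
  exact aux_integrable_hd a hε

lemma aux_ftc_core {ε : ℝ} (hε : 0 < ε) (x : ℝ) :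
    (∫ t in (0:ℝ)..x, (-ε * Real.sign t) * Real.exp (-ε * |t|))
      = Real.exp (-ε * |x|) - 1 := by
  have hderiv : ∀ t : ℝ, HasDerivAt (fun s : ℝ => Real.exp (-ε * s))
      (-ε * Real.exp (-ε * t)) t := by
    intro t
    have h : HasDerivAt (fun s : ℝ => -ε * s) (-ε) t := by
      simpa using (hasDerivAt_id t).const_mul (-ε)
    have h2 := h.exp
    rw [show -ε * Real.exp (-ε * t) = Real.exp (-ε * t) * -ε by ring]
    exact h2
  have hderiv' : ∀ t : ℝ, HasDerivAt (fun s : ℝ => Real.exp (ε * s))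
      (ε * Real.exp (ε * t)) t := by
    intro t
    have h : HasDerivAt (fun s : ℝ => ε * s) ε t := by
      simpa using (hasDerivAt_id t).const_mul ε
    have h2 := h.exp
    rw [show ε * Real.exp (ε * t) = Real.exp (ε * t) * ε by ring]
    exact h2
  rcases le_or_gt 0 x with hx | hx
  · have hcong : (∫ t in (0:ℝ)..x, (-ε * Real.sign t) * Real.exp (-ε * |t|))
        = ∫ t in (0:ℝ)..x, -ε * Real.exp (-ε * t) := by
      rw [intervalIntegral.integral_of_le hx, intervalIntegral.integral_of_le hx]
      refine setIntegral_congr_fun measurableSet_Ioc fun t ht => ?_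
      rw [Real.sign_of_pos ht.1, abs_of_pos ht.1, mul_one]
    rw [hcong, intervalIntegral.integral_eq_sub_of_hasDerivAt (fun t _ => hderiv t)
      ((Continuous.intervalIntegrable (by fun_prop) 0 x))]
    rw [abs_of_nonneg hx, mul_zero, Real.exp_zero]
  · have hxle : x ≤ 0 := hx.le
    have hcong : (∫ t in (0:ℝ)..x, (-ε * Real.sign t) * Real.exp (-ε * |t|))
        = ∫ t in (0:ℝ)..x, ε * Real.exp (ε * t) := by
      rw [intervalIntegral.integral_of_ge hxle, intervalIntegral.integral_of_ge hxle]
      congr 1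
      rw [MeasureTheory.integral_Ioc_eq_integral_Ioo,
        MeasureTheory.integral_Ioc_eq_integral_Ioo]
      refine setIntegral_congr_fun measurableSet_Ioo fun t ht => ?_
      rw [Real.sign_of_neg ht.2, abs_of_neg ht.2, show -ε * -t = ε * t by ring]
      ring
    rw [hcong, intervalIntegral.integral_eq_sub_of_hasDerivAt (fun t _ => hderiv' t)
      ((Continuous.intervalIntegrable (by fun_prop) 0 x))]
    rw [abs_of_neg hx, mul_zero, Real.exp_zero, show -ε * -x = ε * x by ring]

lemma aux_ftc {κ ε : ℝ} (a : ℝ) (hε : 0 < ε) (x : ℝ) :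
    (∫ t in (0:ℝ)..x, κ * (-ε * Real.sign t) * Real.exp (-ε * (|t| + a)))
      = κ * Real.exp (-ε * (|x| + a)) - κ * Real.exp (-ε * (|(0:ℝ)| + a)) := by
  have e1 : ∀ t : ℝ, κ * (-ε * Real.sign t) * Real.exp (-ε * (|t| + a))
      = (κ * Real.exp (-ε * a)) * ((-ε * Real.sign t) * Real.exp (-ε * |t|)) := by
    intro t
    rw [show -ε * (|t| + a) = -ε * |t| + -ε * a by ring, Real.exp_add]
    ring
  simp_rw [e1]
  rw [intervalIntegral.integral_const_mul, aux_ftc_core hε, abs_zero,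
    show -ε * (|x| + a) = -ε * |x| + -ε * a by ring, Real.exp_add,
    show -ε * ((0:ℝ) + a) = -ε * a by ring]
  ring

lemma aux_ftc' {κ ε : ℝ} (a : ℝ) (hε : 0 < ε) (x : ℝ) :
    (∫ t in (0:ℝ)..x, κ * (-ε * Real.sign t) * Real.exp (-ε * (a + |t|)))
      = κ * Real.exp (-ε * (a + |x|)) - κ * Real.exp (-ε * (a + |(0:ℝ)|)) := by
  simp_rw [add_comm a]
  exact aux_ftc a hε x

end GridHelpers

/-- **Exponential test functions on the grid**: for `μ > 0` and `ε > 0`, the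
function `u_ε` belongs to `H¹(𝒢)`, has mass `‖u_ε‖_{L²(𝒢)}² = μ` and
`‖u_ε'‖_{L²(𝒢)}² = ε²μ`. -/


theorem grid_expTest_mass_and_kinetic (μ ε : ℝ) (hμ : 0 < μ) (hε : 0 < ε) :
    (expTest μ ε).MemH1 ∧ (expTest μ ε).mass = μ ∧
      (gridLpPow 2 (expTest μ ε).hd (expTest μ ε).wd).toReal = ε ^ 2 * μ := by
  have h2ε : (0:ℝ) < 2 * ε := by linarith
  set κ := kappa μ ε with hκdef
  have hκ0 : 0 ≤ κ := Real.sqrt_nonneg _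
  set r := Real.exp (-(2*ε)) with hrdef
  have hr1 : r < 1 := Real.exp_lt_one_iff.mpr (by linarith)
  have hrpos : (0:ℝ) < r := Real.exp_pos _
  have h1r : (0:ℝ) < 1 - r := by linarith
  have h1r' : (0:ℝ) < 1 + r := by linarith
  have hκsq : κ ^ 2 = ε * μ / 2 * ((1 - r) / (1 + r)) := by
    rw [hκdef, kappa, show (-2 * ε : ℝ) = -(2*ε) by ring, ← hrdef]
    exact Real.sq_sqrt (mul_nonneg (by positivity)
      (div_nonneg (by linarith) (by linarith)))
  -- L² computation for the function
  have hLp_h : gridLpPow 2 (expTest μ ε).h (expTest μ ε).w = ENNReal.ofReal μ := by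
    have hD : (0:ℝ) ≤ κ ^ 2 / ε := by positivity
    have hsum := aux_tsum_row (D := κ ^ 2 / ε) h2ε hD
    have hT : (0:ℝ) ≤ κ ^ 2 / ε * ((1 + r) / (1 - r)) :=
      mul_nonneg hD (div_nonneg (by linarith) (by linarith))
    have e1 : (∑' j : ℤ, ∫⁻ x : ℝ, (‖(expTest μ ε).h j x‖₊ : ℝ≥0∞) ^ (2:ℝ))
        = ENNReal.ofReal (κ ^ 2 / ε * ((1 + r) / (1 - r))) := by
      rw [← hsum]
      exact tsum_congr fun j => aux_line_h _ hε
    have e2 : (∑' k : ℤ, ∫⁻ y : ℝ, (‖(expTest μ ε).w k y‖₊ : ℝ≥0∞) ^ (2:ℝ))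
        = ENNReal.ofReal (κ ^ 2 / ε * ((1 + r) / (1 - r))) := by
      rw [← hsum]
      exact tsum_congr fun k => aux_line_h' _ hε
    rw [gridLpPow, e1, e2, ← ENNReal.ofReal_add hT hT]
    congr 1
    rw [hκsq]
    field_simp
    ring
  -- L² computation for the derivative
  have hLp_hd : gridLpPow 2 (expTest μ ε).hd (expTest μ ε).wd
      = ENNReal.ofReal (ε ^ 2 * μ) := by
    have hD : (0:ℝ) ≤ κ ^ 2 * ε := by positivity
    have hsum := aux_tsum_row (D := κ ^ 2 * ε) h2ε hD
    have hT : (0:ℝ) ≤ κ ^ 2 * ε * ((1 + r) / (1 - r)) :=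
      mul_nonneg hD (div_nonneg (by linarith) (by linarith))
    have e1 : (∑' j : ℤ, ∫⁻ x : ℝ, (‖(expTest μ ε).hd j x‖₊ : ℝ≥0∞) ^ (2:ℝ))
        = ENNReal.ofReal (κ ^ 2 * ε * ((1 + r) / (1 - r))) := by
      rw [← hsum]
      exact tsum_congr fun j => aux_line_hd _ hε
    have e2 : (∑' k : ℤ, ∫⁻ y : ℝ, (‖(expTest μ ε).wd k y‖₊ : ℝ≥0∞) ^ (2:ℝ))
        = ENNReal.ofReal (κ ^ 2 * ε * ((1 + r) / (1 - r))) := by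
      rw [← hsum]
      exact tsum_congr fun k => aux_line_hd' _ hε
    rw [gridLpPow, e1, e2, ← ENNReal.ofReal_add hT hT]
    congr 1
    rw [hκsq]
    field_simp
    ring
  refine ⟨⟨?_, ?_, ?_, ?_, ?_, ?_, ?_, ?_⟩, ?_, ?_⟩
  · intro j
    exact continuous_const.mul (Real.continuous_exp.comp
      (continuous_const.mul (continuous_abs.add continuous_const)))
  · intro k
    exact continuous_const.mul (Real.continuous_exp.comp
      (continuous_const.mul (continuous_const.add continuous_abs)))
  · intro j
    exact (aux_integrable_hd _ hε).locallyIntegrable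
  · intro k
    exact (aux_integrable_hd' _ hε).locallyIntegrable
  · intro j x
    exact aux_ftc _ hε x
  · intro k y
    exact aux_ftc' _ hε y
  · rw [hLp_h]; exact ENNReal.ofReal_lt_top
  · rw [hLp_hd]; exact ENNReal.ofReal_lt_top
  · rw [GridFunc.mass, hLp_h, ENNReal.toReal_ofReal hμ.le]
  · rw [hLp_hd, ENNReal.toReal_ofReal (by positivity)]


end
end

section
/- Nonpositivity of the ground-state energy level: for every real p ≥ 4 and every μ > 0, one has ℰ_p(μ) ≤ 0; that is, inf{E_p(u) : u ∈ H¹_μ(𝒢)} ≤ 0. -/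
/- Formalization of NLS ground states on the two-dimensional grid 𝒢
   (the planar metric graph with vertex set ℤ×ℤ and unit edges).

   A function `u` on 𝒢 is encoded by the family `h j` of its restrictions to
   the horizontal lines `H j` and the family `w k` of its restrictions to the
   vertical lines `V k`, subject to the vertex-compatibility conditions
   `h j k = w k j`.  The (weak) derivative of `u` along each line is carried
   as additional data `hd`, `wd`, tied to `h`, `w` by the fundamental theorem
   of calculus in the membership predicates below. -/

open MeasureTheory Filter Topology
open scoped ENNReal NNReal

noncomputable section


open Set


def psi (n y : ℝ) : ℝ := max 0 (1 - |y|/n)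

def psi' (n y : ℝ) : ℝ :=
  if y < -n then 0 else if y < 0 then 1/n else if y < n then -1/n else 0

lemma psi_nonneg (n y : ℝ) : 0 ≤ psi n y := le_max_left _ _
lemma psi_le_one (n y : ℝ) (hn : 0 < n) : psi n y ≤ 1 := by
  have h1 : 0 ≤ |y|/n := div_nonneg (abs_nonneg _) hn.le
  exact max_le (by norm_num) (by linarith)
lemma psi_eq_zero (n y : ℝ) (hn : 0 < n) (hy : n ≤ |y|) : psi n y = 0 := by
  have : 1 ≤ |y|/n := (one_le_div hn).2 hy
  exact max_eq_left (by linarith)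
lemma psi_eq_on_neg (n y : ℝ) (hn : 0 < n) (h1 : -n ≤ y) (h2 : y ≤ 0) :
    psi n y = 1 + y/n := by
  rw [psi, abs_of_nonpos h2, max_eq_right] <;>
    [ring_nf; (have : -y/n ≤ 1 := by rw [div_le_one hn]; linarith
               linarith)]
lemma psi_eq_on_pos (n y : ℝ) (hn : 0 < n) (h1 : 0 ≤ y) (h2 : y ≤ n) :
    psi n y = 1 - y/n := by
  rw [psi, abs_of_nonneg h1, max_eq_right]
  have : y/n ≤ 1 := by rw [div_le_one hn]; linarith
  linarith
lemma psi_cont (n : ℝ) : Continuous (psi n) := by unfold psi; fun_prop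
lemma psi_zero (n : ℝ) : psi n 0 = 1 := by simp [psi]
lemma psi_ge_half (n y : ℝ) (hn : 0 < n) (hy : |y| ≤ n/2) : 1/2 ≤ psi n y := by
  have h1 : |y|/n ≤ 1/2 := by rw [div_le_iff₀ hn]; linarith
  have : 1/2 ≤ 1 - |y|/n := by linarith
  exact this.trans (le_max_right _ _)

lemma psi'_meas (n : ℝ) : Measurable (psi' n) := by
  unfold psi'
  exact (Measurable.ite (measurableSet_lt measurable_id measurable_const) measurable_const
    (Measurable.ite (measurableSet_lt measurable_id measurable_const) measurable_const
      (Measurable.ite (measurableSet_lt measurable_id measurable_const) measurable_const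
        measurable_const)))

lemma psi'_abs_le (n y : ℝ) (hn : 0 < n) : |psi' n y| ≤ 1/n := by
  have h0 : |(0:ℝ)| ≤ 1/n := by rw [abs_zero]; positivity
  have h1 : |1/n| ≤ 1/n := by rw [abs_of_pos (by positivity : (0:ℝ) < 1/n)]
  have h2 : |(-1)/n| ≤ 1/n := by rw [neg_div, abs_neg]; exact h1
  unfold psi'; split_ifs <;> assumption

lemma psi'_zero_outside (n y : ℝ) (hn : 0 < n) (hy : y ∉ Icc (-n) n) : psi' n y = 0 := by
  simp only [mem_Icc, not_and_or, not_le] at hy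
  unfold psi'
  rcases hy with h | h
  · rw [if_pos h]
  · rw [if_neg (by linarith), if_neg (by linarith), if_neg (by linarith)]

lemma psi'_integrable (n : ℝ) (hn : 0 < n) : Integrable (psi' n) := by
  have hind : Integrable ((Icc (-n) n).indicator (fun _ => (1:ℝ)/n)) :=
    (integrableOn_const measure_Icc_lt_top.ne).integrable_indicator measurableSet_Icc
  refine hind.mono' (psi'_meas n).aestronglyMeasurable (ae_of_all _ fun y => ?_)
  by_cases hy : y ∈ Icc (-n) n
  · rw [indicator_of_mem hy]
    simpa [Real.norm_eq_abs] using psi'_abs_le n y hn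
  · rw [psi'_zero_outside n y hn hy]
    simpa using indicator_nonneg (fun z _ => by positivity : ∀ z ∈ Icc (-n) n, (0:ℝ) ≤ 1/n) y

lemma psi_hasDerivWithinAt (n : ℝ) (hn : 0 < n) (x : ℝ) :
    HasDerivWithinAt (psi n) (psi' n x) (Ioi x) x := by
  have baseN : ∀ z : ℝ, HasDerivAt (fun y => 1 + y/n) (1/n) z := fun z =>
    ((hasDerivAt_id z).div_const n).const_add 1
  have baseP : ∀ z : ℝ, HasDerivAt (fun y => 1 - y/n) (-1/n) z := fun z => by
    simpa [neg_div] using ((hasDerivAt_id z).div_const n).const_sub 1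
  rcases lt_trichotomy x (-n) with h | h | h
  · have heq : psi n =ᶠ[nhds x] (fun _ => (0:ℝ)) := by
      filter_upwards [Iio_mem_nhds h] with y hy
      have hy' : y < -n := mem_Iio.1 hy
      exact psi_eq_zero n y hn (le_abs.2 (Or.inr (by linarith)))
    have h0 : HasDerivAt (psi n) 0 x :=
      (hasDerivAt_const x (0:ℝ)).congr_of_eventuallyEq heq
    simpa [psi', h] using h0.hasDerivWithinAt
  · subst h
    have heq : (fun y => 1 + y/n) =ᶠ[nhdsWithin (-n) (Ioi (-n))] psi n := by
      filter_upwards [self_mem_nhdsWithin,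
        nhdsWithin_le_nhds (Iio_mem_nhds (by linarith : (-n:ℝ) < 0))] with y hy hy'
      exact (psi_eq_on_neg n y hn (mem_Ioi.1 hy).le (mem_Iio.1 hy').le).symm
    have hval : psi n (-n) = 1 + (-n)/n := psi_eq_on_neg n (-n) hn le_rfl (by linarith)
    have : HasDerivWithinAt (psi n) (1/n) (Ioi (-n)) (-n) :=
      ((baseN (-n)).hasDerivWithinAt).congr_of_eventuallyEq heq.symm hval
    have hv : psi' n (-n) = 1/n := by
      rw [psi', if_neg (lt_irrefl _), if_pos (by linarith : (-n:ℝ) < 0)]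
    rwa [hv]
  rcases lt_trichotomy x 0 with h2 | h2 | h2
  · -- -n < x < 0
    have heq : psi n =ᶠ[nhds x] (fun y => 1 + y/n) := by
      filter_upwards [Ioo_mem_nhds h h2] with y hy
      exact psi_eq_on_neg n y hn hy.1.le hy.2.le
    have : HasDerivAt (psi n) (1/n) x := (baseN x).congr_of_eventuallyEq heq
    have hv : psi' n x = 1/n := by
      rw [psi', if_neg (by linarith), if_pos h2]
    rw [hv]; exact this.hasDerivWithinAt
  · subst h2
    have heq : (fun y => 1 - y/n) =ᶠ[nhdsWithin 0 (Ioi 0)] psi n := by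
      filter_upwards [self_mem_nhdsWithin,
        nhdsWithin_le_nhds (Iio_mem_nhds hn)] with y hy hy'
      exact (psi_eq_on_pos n y hn (mem_Ioi.1 hy).le (mem_Iio.1 hy').le).symm
    have hval : psi n 0 = 1 - 0/n := by rw [psi_zero]; ring
    have : HasDerivWithinAt (psi n) (-1/n) (Ioi 0) 0 :=
      ((baseP 0).hasDerivWithinAt).congr_of_eventuallyEq heq.symm hval
    have hv : psi' n 0 = -1/n := by
      rw [psi', if_neg (by linarith), if_neg (lt_irrefl _), if_pos hn]
    rwa [hv]
  rcases lt_trichotomy x n with h3 | h3 | h3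
  · -- 0 < x < n
    have heq : psi n =ᶠ[nhds x] (fun y => 1 - y/n) := by
      filter_upwards [Ioo_mem_nhds h2 h3] with y hy
      exact psi_eq_on_pos n y hn hy.1.le hy.2.le
    have : HasDerivAt (psi n) (-1/n) x := (baseP x).congr_of_eventuallyEq heq
    have hv : psi' n x = -1/n := by
      rw [psi', if_neg (by linarith), if_neg (by linarith), if_pos h3]
    rw [hv]; exact this.hasDerivWithinAt
  · have h3' := h3.symm; subst h3'
    have heq : (fun _ => (0:ℝ)) =ᶠ[nhdsWithin n (Ioi n)] psi n := by
      filter_upwards [self_mem_nhdsWithin] with y hy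
      exact (psi_eq_zero n y hn (le_abs.2 (Or.inl (mem_Ioi.1 hy).le))).symm
    have hval : psi n n = 0 := psi_eq_zero n n hn (le_abs_self n)
    have : HasDerivWithinAt (psi n) 0 (Ioi n) n :=
      ((hasDerivAt_const n (0:ℝ)).hasDerivWithinAt).congr_of_eventuallyEq heq.symm hval
    have hv : psi' n n = 0 := by
      rw [psi', if_neg (by linarith), if_neg (by linarith), if_neg (lt_irrefl _)]
    rwa [hv]
  · have heq : psi n =ᶠ[nhds x] (fun _ => (0:ℝ)) := by
      filter_upwards [Ioi_mem_nhds h3] with y hy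
      exact psi_eq_zero n y hn (le_abs.2 (Or.inl (mem_Ioi.1 hy).le))
    have h0 : HasDerivAt (psi n) 0 x :=
      (hasDerivAt_const x (0:ℝ)).congr_of_eventuallyEq heq
    have hv : psi' n x = 0 := by
      rw [psi', if_neg (by linarith), if_neg (by linarith), if_neg (by linarith)]
    rw [hv]; exact h0.hasDerivWithinAt

lemma psi_ftc (n : ℝ) (hn : 0 < n) (x : ℝ) :
    (∫ t in (0:ℝ)..x, psi' n t) = psi n x - psi n 0 :=
  intervalIntegral.integral_eq_sub_of_hasDeriv_right
    ((psi_cont n).continuousOn)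
    (fun t _ => psi_hasDerivWithinAt n hn t)
    ((psi'_integrable n hn).intervalIntegrable)


lemma sq_meas {f : ℝ → ℝ} (hf : Measurable f) :
    Measurable (fun x => ((‖f x‖₊ : ℝ≥0∞)) ^ (2:ℝ)) :=
  ENNReal.continuous_rpow_const.measurable.comp hf.nnnorm.coe_nnreal_ennreal

/-- the squared L² lintegral of psi -/
def Lpsi (n : ℝ) : ℝ≥0∞ := ∫⁻ x : ℝ, ((‖psi n x‖₊ : ℝ≥0∞)) ^ (2:ℝ)
/-- the squared L² lintegral of psi' -/
def Lpsi' (n : ℝ) : ℝ≥0∞ := ∫⁻ x : ℝ, ((‖psi' n x‖₊ : ℝ≥0∞)) ^ (2:ℝ)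
/-- the discrete sum of psi(j)² -/
def Spsi (n : ℝ) : ℝ≥0∞ := ∑' j : ℤ, ((‖psi n (j:ℝ)‖₊ : ℝ≥0∞)) ^ (2:ℝ)

lemma ennnorm_rpow_two_of_nonneg {r : ℝ} (hr : 0 ≤ r) :
    ((‖r‖₊ : ℝ≥0∞)) ^ (2:ℝ) = ENNReal.ofReal (r^2) := by
  rw [show ((‖r‖₊ : ℝ≥0∞)) = ENNReal.ofReal r from Real.enorm_eq_ofReal hr, ENNReal.ofReal_rpow_of_nonneg hr (by norm_num),
    show ((2:ℝ)) = ((2:ℕ):ℝ) by norm_num, Real.rpow_natCast]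

lemma Lpsi_le (n : ℝ) (hn : 0 < n) : Lpsi n ≤ ENNReal.ofReal (2*n) := by
  have hpt : ∀ x, ((‖psi n x‖₊ : ℝ≥0∞)) ^ (2:ℝ)
      ≤ (Icc (-n) n).indicator (fun _ => (1:ℝ≥0∞)) x := by
    intro x
    by_cases hx : x ∈ Icc (-n) n
    · rw [indicator_of_mem hx]
      refine ENNReal.rpow_le_one ?_ (by norm_num)
      rw [show ((‖psi n x‖₊ : ℝ≥0∞)) = ENNReal.ofReal (psi n x) from Real.enorm_eq_ofReal (psi_nonneg n x)]
      exact ENNReal.ofReal_le_one.2 (psi_le_one n x hn)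
    · have : psi n x = 0 := by
        simp only [mem_Icc, not_and_or, not_le] at hx
        refine psi_eq_zero n x hn ?_
        rcases hx with h | h
        · exact le_abs.2 (Or.inr (by linarith))
        · exact le_abs.2 (Or.inl h.le)
      rw [this, indicator_of_notMem hx]
      simp [ENNReal.zero_rpow_of_pos]
  calc Lpsi n ≤ ∫⁻ x, (Icc (-n) n).indicator (fun _ => (1:ℝ≥0∞)) x :=
        lintegral_mono hpt
    _ = ENNReal.ofReal (2*n) := by
        rw [lintegral_indicator_const measurableSet_Icc, one_mul, Real.volume_Icc]
        congr 1; ring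

lemma Lpsi_ge (n : ℝ) (hn : 0 < n) : ENNReal.ofReal (n/4) ≤ Lpsi n := by
  have hpt : ∀ x, (Icc (-(n/2)) (n/2)).indicator (fun _ => ENNReal.ofReal (1/4)) x
      ≤ ((‖psi n x‖₊ : ℝ≥0∞)) ^ (2:ℝ) := by
    intro x
    by_cases hx : x ∈ Icc (-(n/2)) (n/2)
    · rw [indicator_of_mem hx]
      have h12 : (1:ℝ)/2 ≤ psi n x := by
        refine psi_ge_half n x hn (abs_le.2 ?_)
        exact ⟨by simpa using hx.1, hx.2⟩
      rw [ennnorm_rpow_two_of_nonneg (psi_nonneg n x)]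
      exact ENNReal.ofReal_le_ofReal (by nlinarith)
    · rw [indicator_of_notMem hx]; exact zero_le
  calc ENNReal.ofReal (n/4)
      = ∫⁻ x, (Icc (-(n/2)) (n/2)).indicator (fun _ => ENNReal.ofReal (1/4)) x := by
        rw [lintegral_indicator_const measurableSet_Icc, Real.volume_Icc,
          ← ENNReal.ofReal_mul (by norm_num)]
        congr 1; ring
    _ ≤ Lpsi n := lintegral_mono hpt

lemma Lpsi'_le (n : ℝ) (hn : 0 < n) : Lpsi' n ≤ ENNReal.ofReal (2/n) := by
  have hpt : ∀ x, ((‖psi' n x‖₊ : ℝ≥0∞)) ^ (2:ℝ)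
      ≤ (Icc (-n) n).indicator (fun _ => ENNReal.ofReal (1/n^2)) x := by
    intro x
    by_cases hx : x ∈ Icc (-n) n
    · rw [indicator_of_mem hx]
      have habs : ((‖psi' n x‖₊ : ℝ≥0∞)) ^ (2:ℝ) = ENNReal.ofReal (|psi' n x|^2) := by
        rw [show (‖psi' n x‖₊) = ‖(|psi' n x|)‖₊ from (by simp)]
        exact ennnorm_rpow_two_of_nonneg (abs_nonneg _)
      rw [habs]
      refine ENNReal.ofReal_le_ofReal ?_
      have h1 : |psi' n x| ≤ 1/n := psi'_abs_le n x hn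
      have h0 : (0:ℝ) ≤ |psi' n x| := abs_nonneg _
      calc |psi' n x|^2 = |psi' n x| * |psi' n x| := sq _
        _ ≤ (1/n) * (1/n) := mul_le_mul h1 h1 h0 (by positivity)
        _ = 1/n^2 := by ring
    · rw [psi'_zero_outside n x hn hx]
      simp [ENNReal.zero_rpow_of_pos]
  calc Lpsi' n ≤ ∫⁻ x, (Icc (-n) n).indicator (fun _ => ENNReal.ofReal (1/n^2)) x :=
        lintegral_mono hpt
    _ = ENNReal.ofReal (2/n) := by
        rw [lintegral_indicator_const measurableSet_Icc, Real.volume_Icc,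
          ← ENNReal.ofReal_mul (by positivity)]
        congr 1; field_simp; ring

lemma Spsi_ge (n : ℝ) : 1 ≤ Spsi n := by
  have h0 : ((‖psi n ((0:ℤ):ℝ)‖₊ : ℝ≥0∞)) ^ (2:ℝ) = 1 := by
    norm_num [psi_zero]
  calc (1:ℝ≥0∞) = ((‖psi n ((0:ℤ):ℝ)‖₊ : ℝ≥0∞)) ^ (2:ℝ) := h0.symm
    _ ≤ Spsi n := ENNReal.le_tsum 0

lemma Spsi_lt_top (n : ℝ) (hn : 0 < n) : Spsi n < ⊤ := by
  have hzero : ∀ j : ℤ, j ∉ Finset.Icc (-⌈n⌉) ⌈n⌉ →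
      ((‖psi n (j:ℝ)‖₊ : ℝ≥0∞)) ^ (2:ℝ) = 0 := by
    intro j hj
    have : n ≤ |(j:ℝ)| := by
      simp only [Finset.mem_Icc, not_and_or, not_le] at hj
      have hc : n ≤ (⌈n⌉:ℝ) := Int.le_ceil n
      rcases hj with h | h
      · have hj' : (j:ℝ) < -(⌈n⌉:ℝ) := by exact_mod_cast h
        refine le_abs.2 (Or.inr ?_); linarith
      · have : (⌈n⌉:ℝ) < (j:ℝ) := by exact_mod_cast h
        exact le_abs.2 (Or.inl (by linarith))
    rw [psi_eq_zero n _ hn this]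
    simp [ENNReal.zero_rpow_of_pos]
  rw [Spsi, tsum_eq_sum hzero]
  refine ENNReal.sum_lt_top.2 fun j _ => ?_
  exact ENNReal.rpow_lt_top_of_nonneg (by norm_num) ENNReal.coe_ne_top


lemma sq_lint_scale (c : ℝ) {f : ℝ → ℝ} (hf : Measurable f) :
    (∫⁻ x : ℝ, ((‖c * f x‖₊ : ℝ≥0∞)) ^ (2:ℝ))
      = ((‖c‖₊ : ℝ≥0∞)) ^ (2:ℝ) * ∫⁻ x : ℝ, ((‖f x‖₊ : ℝ≥0∞)) ^ (2:ℝ) := by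
  have : ∀ x : ℝ, ((‖c * f x‖₊ : ℝ≥0∞)) ^ (2:ℝ)
      = ((‖c‖₊ : ℝ≥0∞)) ^ (2:ℝ) * ((‖f x‖₊ : ℝ≥0∞)) ^ (2:ℝ) := by
    intro x
    rw [nnnorm_mul, ENNReal.coe_mul, ENNReal.mul_rpow_of_nonneg _ _ (by norm_num : (0:ℝ) ≤ 2)]
  simp_rw [this]
  exact lintegral_const_mul _ (sq_meas hf)

lemma sum_lint_scale (n a : ℝ) {g : ℝ → ℝ} (hg : Measurable g) :
    (∑' j : ℤ, ∫⁻ x : ℝ, ((‖a * (psi n (j:ℝ) * g x)‖₊ : ℝ≥0∞)) ^ (2:ℝ))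
      = ((‖a‖₊ : ℝ≥0∞)) ^ (2:ℝ) * Spsi n * (∫⁻ x : ℝ, ((‖g x‖₊ : ℝ≥0∞)) ^ (2:ℝ)) := by
  have h1 : ∀ j : ℤ, (∫⁻ x : ℝ, ((‖a * (psi n (j:ℝ) * g x)‖₊ : ℝ≥0∞)) ^ (2:ℝ))
      = (((‖a‖₊ : ℝ≥0∞)) ^ (2:ℝ) * ((‖psi n (j:ℝ)‖₊ : ℝ≥0∞)) ^ (2:ℝ))
        * (∫⁻ x : ℝ, ((‖g x‖₊ : ℝ≥0∞)) ^ (2:ℝ)) := by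
    intro j
    have := sq_lint_scale (a * psi n (j:ℝ)) hg
    simp_rw [mul_assoc] at this
    rw [this, nnnorm_mul, ENNReal.coe_mul,
      ENNReal.mul_rpow_of_nonneg _ _ (by norm_num : (0:ℝ) ≤ 2)]
  simp_rw [h1]
  rw [ENNReal.tsum_mul_right, ENNReal.tsum_mul_left]
  rfl

/-- The trial function: `a · ψ(j) ψ(x)` on horizontal lines, symmetric in the
vertical direction. -/
def gridU (n a : ℝ) : GridFunc where
  h j x := a * (psi n (j:ℝ) * psi n x)
  w k y := a * (psi n (k:ℝ) * psi n y)
  hd j x := a * (psi n (j:ℝ) * psi' n x)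
  wd k y := a * (psi n (k:ℝ) * psi' n y)
  compat := fun j k => by ring

lemma gridU_lp2 (n a : ℝ) :
    gridLpPow 2 (gridU n a).h (gridU n a).w
      = ((‖a‖₊ : ℝ≥0∞)) ^ (2:ℝ) * Spsi n * Lpsi n
        + ((‖a‖₊ : ℝ≥0∞)) ^ (2:ℝ) * Spsi n * Lpsi n := by
  rw [gridLpPow]
  rw [show (gridU n a).h = fun (j:ℤ) (x:ℝ) => a * (psi n (j:ℝ) * psi n x) from rfl,
      show (gridU n a).w = fun (k:ℤ) (y:ℝ) => a * (psi n (k:ℝ) * psi n y) from rfl]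
  rw [sum_lint_scale n a (psi_cont n).measurable]
  rfl

lemma gridU_lp2' (n a : ℝ) :
    gridLpPow 2 (gridU n a).hd (gridU n a).wd
      = ((‖a‖₊ : ℝ≥0∞)) ^ (2:ℝ) * Spsi n * Lpsi' n
        + ((‖a‖₊ : ℝ≥0∞)) ^ (2:ℝ) * Spsi n * Lpsi' n := by
  rw [gridLpPow]
  rw [show (gridU n a).hd = fun (j:ℤ) (x:ℝ) => a * (psi n (j:ℝ) * psi' n x) from rfl,
      show (gridU n a).wd = fun (k:ℤ) (y:ℝ) => a * (psi n (k:ℝ) * psi' n y) from rfl]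
  rw [sum_lint_scale n a (psi'_meas n)]
  rfl

lemma gridU_memH1 (n a : ℝ) (hn : 0 < n) : (gridU n a).MemH1 := by
  refine ⟨fun j => continuous_const.mul (continuous_const.mul (psi_cont n)),
          fun k => continuous_const.mul (continuous_const.mul (psi_cont n)),
          fun j => ?_, fun k => ?_, fun j x => ?_, fun k y => ?_, ?_, ?_⟩
  · have : Integrable (fun x => (a * psi n (j:ℝ)) * psi' n x) :=
      (psi'_integrable n hn).const_mul _
    refine (this.congr (ae_of_all _ fun x => by show _ = (gridU n a).hd j x; unfold gridU; ring)).locallyIntegrable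
  · have : Integrable (fun y => (a * psi n (k:ℝ)) * psi' n y) :=
      (psi'_integrable n hn).const_mul _
    refine (this.congr (ae_of_all _ fun y => by show _ = (gridU n a).wd k y; unfold gridU; ring)).locallyIntegrable
  · show (∫ t in (0:ℝ)..x, a * (psi n (j:ℝ) * psi' n t)) = _
    have : ∀ t : ℝ, a * (psi n (j:ℝ) * psi' n t) = (a * psi n (j:ℝ)) * psi' n t :=
      fun t => by ring
    simp_rw [this]
    rw [intervalIntegral.integral_const_mul, psi_ftc n hn x]
    show _ = a * (psi n (j:ℝ) * psi n x) - a * (psi n (j:ℝ) * psi n 0)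
    ring
  · show (∫ t in (0:ℝ)..y, a * (psi n (k:ℝ) * psi' n t)) = _
    have : ∀ t : ℝ, a * (psi n (k:ℝ) * psi' n t) = (a * psi n (k:ℝ)) * psi' n t :=
      fun t => by ring
    simp_rw [this]
    rw [intervalIntegral.integral_const_mul, psi_ftc n hn y]
    show _ = a * (psi n (k:ℝ) * psi n y) - a * (psi n (k:ℝ) * psi n 0)
    ring
  · rw [gridU_lp2 n a]
    have hfin : ((‖a‖₊ : ℝ≥0∞)) ^ (2:ℝ) * Spsi n * Lpsi n < ⊤ := by
      refine ENNReal.mul_lt_top (ENNReal.mul_lt_top ?_ (Spsi_lt_top n hn)) ?_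
      · exact ENNReal.rpow_lt_top_of_nonneg (by norm_num) ENNReal.coe_ne_top
      · exact lt_of_le_of_lt (Lpsi_le n hn) ENNReal.ofReal_lt_top
    exact ENNReal.add_lt_top.2 ⟨hfin, hfin⟩
  · rw [gridU_lp2' n a]
    have hfin : ((‖a‖₊ : ℝ≥0∞)) ^ (2:ℝ) * Spsi n * Lpsi' n < ⊤ := by
      refine ENNReal.mul_lt_top (ENNReal.mul_lt_top ?_ (Spsi_lt_top n hn)) ?_
      · exact ENNReal.rpow_lt_top_of_nonneg (by norm_num) ENNReal.coe_ne_top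
      · exact lt_of_le_of_lt (Lpsi'_le n hn) ENNReal.ofReal_lt_top
    exact ENNReal.add_lt_top.2 ⟨hfin, hfin⟩

/-- **Nonpositivity of the ground-state energy level**: for every `p ≥ 4` and
`μ > 0` one has `ℰ_p(μ) ≤ 0`: there are functions in `H¹_μ(𝒢)` of arbitrarily
small positive energy. -/
theorem grid_level_nonpos (p μ : ℝ) (hp : 4 ≤ p) (hμ : 0 < μ) :
    ∀ ε : ℝ, 0 < ε → ∃ u : GridFunc, u.MemH1 ∧ u.mass = μ ∧ u.energy p < ε := by
  intro ε hε
  -- choose the scale n = N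
  obtain ⟨N, hN⟩ := exists_nat_gt (max 1 (Real.sqrt (4*μ/ε)))
  set n : ℝ := (N:ℝ) with hn_def
  have hn1 : 1 < n := lt_of_le_of_lt (le_max_left _ _) hN
  have hn : 0 < n := by linarith
  have hsq : 4*μ/n^2 < ε := by
    have hs : Real.sqrt (4*μ/ε) < n := lt_of_le_of_lt (le_max_right _ _) hN
    have h4 : (0:ℝ) ≤ 4*μ/ε := by positivity
    have : 4*μ/ε < n^2 := by
      have := Real.sq_sqrt h4
      nlinarith [Real.sqrt_nonneg (4*μ/ε)]
    rw [div_lt_iff₀ (by positivity)]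
    rw [div_lt_iff₀ hε] at this
    nlinarith
  -- quantitative facts about psi
  have hS1 : 1 ≤ Spsi n := Spsi_ge n
  have hStop : Spsi n < ⊤ := Spsi_lt_top n hn
  have hLlow : ENNReal.ofReal (n/4) ≤ Lpsi n := Lpsi_ge n hn
  have hLhigh : Lpsi n ≤ ENNReal.ofReal (2*n) := Lpsi_le n hn
  have hL'high : Lpsi' n ≤ ENNReal.ofReal (2/n) := Lpsi'_le n hn
  have hLtop : Lpsi n < ⊤ := lt_of_le_of_lt hLhigh ENNReal.ofReal_lt_top
  have hL'top : Lpsi' n < ⊤ := lt_of_le_of_lt hL'high ENNReal.ofReal_lt_top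
  set s : ℝ := (Spsi n).toReal with hs_def
  set l : ℝ := (Lpsi n).toReal with hl_def
  set l' : ℝ := (Lpsi' n).toReal with hl'_def
  have hs1 : 1 ≤ s := by
    rw [hs_def, ← ENNReal.toReal_one]
    exact ENNReal.toReal_mono hStop.ne hS1
  have hspos : 0 < s := by linarith
  have hlge : n/4 ≤ l := by
    rw [hl_def]
    calc n/4 = (ENNReal.ofReal (n/4)).toReal := (ENNReal.toReal_ofReal (by positivity)).symm
      _ ≤ _ := ENNReal.toReal_mono hLtop.ne hLlow
  have hlpos : 0 < l := by linarith
  have hl'le : l' ≤ 2/n := by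
    rw [hl'_def]
    calc (Lpsi' n).toReal ≤ (ENNReal.ofReal (2/n)).toReal :=
          ENNReal.toReal_mono ENNReal.ofReal_ne_top hL'high
      _ = 2/n := ENNReal.toReal_ofReal (by positivity)
  have hl'0 : 0 ≤ l' := ENNReal.toReal_nonneg
  -- choose the amplitude a
  set a : ℝ := Real.sqrt (μ / (2 * (s * l))) with ha_def
  have ha0 : 0 ≤ a := Real.sqrt_nonneg _
  have ha2 : a^2 = μ / (2 * (s * l)) := Real.sq_sqrt (by positivity)
  have hA : ((‖a‖₊ : ℝ≥0∞)) ^ (2:ℝ) = ENNReal.ofReal (a^2) :=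
    ennnorm_rpow_two_of_nonneg ha0
  refine ⟨gridU n a, gridU_memH1 n a hn, ?_, ?_⟩
  · -- mass computation
    rw [GridFunc.mass, gridU_lp2 n a, hA]
    have hX : (ENNReal.ofReal (a^2) * Spsi n * Lpsi n).toReal = a^2 * (s * l) := by
      rw [ENNReal.toReal_mul, ENNReal.toReal_mul, ENNReal.toReal_ofReal (sq_nonneg a),
        mul_assoc]
    have hXtop : ENNReal.ofReal (a^2) * Spsi n * Lpsi n ≠ ⊤ := by
      refine (ENNReal.mul_lt_top (ENNReal.mul_lt_top ENNReal.ofReal_lt_top hStop) hLtop).ne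
    rw [ENNReal.toReal_add hXtop hXtop, hX, ha2]
    field_simp
    ring
  · -- energy bound
    have hK : (gridLpPow 2 (gridU n a).hd (gridU n a).wd).toReal = 2 * (a^2 * (s * l')) := by
      rw [gridU_lp2' n a, hA]
      have hXtop : ENNReal.ofReal (a^2) * Spsi n * Lpsi' n ≠ ⊤ :=
        (ENNReal.mul_lt_top (ENNReal.mul_lt_top ENNReal.ofReal_lt_top hStop) hL'top).ne
      rw [ENNReal.toReal_add hXtop hXtop, ENNReal.toReal_mul, ENNReal.toReal_mul,
        ENNReal.toReal_ofReal (sq_nonneg a)]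
      ring
    have hmu : μ = 2 * (a^2 * (s * l)) := by
      rw [ha2]; field_simp
    have hKle : (gridLpPow 2 (gridU n a).hd (gridU n a).wd).toReal ≤ 8*μ/n^2 := by
      rw [hK]
      have ha2nn : 0 ≤ a^2 := sq_nonneg a
      have h1 : 2 * (a^2 * (s * l')) ≤ 2 * (a^2 * (s * (2/n))) := by
        have : s * l' ≤ s * (2/n) := mul_le_mul_of_nonneg_left hl'le hspos.le
        nlinarith
      refine h1.trans ?_
      rw [le_div_iff₀ (by positivity : (0:ℝ) < n^2)]
      have e1 : 2 * (a^2 * (s * (2/n))) * n^2 = 4 * ((a^2*s) * n) := by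
        field_simp; ring
      have e2 : 8*μ = 16 * ((a^2*s) * l) := by rw [hmu]; ring
      rw [e1, e2]
      have hm := mul_le_mul_of_nonneg_left hlge (by positivity : (0:ℝ) ≤ a^2*s)
      nlinarith [hm]
    have hnonneg : 0 ≤ (1/p) * (gridLpPow p (gridU n a).h (gridU n a).w).toReal := by
      have hp0 : 0 < p := by linarith
      positivity
    have : (gridU n a).energy p ≤ (1/2) * (8*μ/n^2) := by
      rw [GridFunc.energy]
      have := hKle
      nlinarith
    refine lt_of_le_of_lt this ?_
    have : (1/2) * (8*μ/n^2) = 4*μ/n^2 := by ring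
    rw [this]; exact hsq


end
end

section
/- Positivity of the energy below the critical mass: let p ∈ [4,6] and μ > 0. If μ ≤ μ_p, then E_p(u) ≥ 0 for every u ∈ H¹_μ(𝒢); if moreover μ < μ_p, then E_p(u) > 0 for every u ∈ H¹_μ(𝒢) (so in particular no ground state of mass μ exists when μ < μ_p and p < 6). -/
/- Formalization of NLS ground states on the two-dimensional grid 𝒢
   (the planar metric graph with vertex set ℤ×ℤ and unit edges).

   A function `u` on 𝒢 is encoded by the family `h j` of its restrictions to
   the horizontal lines `H j` and the family `w k` of its restrictions to the
   vertical lines `V k`, subject to the vertex-compatibility conditions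
   `h j k = w k j`.  The (weak) derivative of `u` along each line is carried
   as additional data `hd`, `wd`, tied to `h`, `w` by the fundamental theorem
   of calculus in the membership predicates below. -/

open MeasureTheory Filter Topology
open scoped ENNReal NNReal

noncomputable section

/-- If a line restriction is recovered by integrating its locally integrable
derivative, the derivative has zero `L²` norm, and the function has finite
`L²` norm, then the function vanishes identically. -/
lemma line_zero_aux (f fd : ℝ → ℝ) (hfd : LocallyIntegrable fd)
    (hftc : ∀ x, (∫ t in (0:ℝ)..x, fd t) = f x - f 0)
    (hfin : (∫⁻ x : ℝ, (‖f x‖₊ : ℝ≥0∞) ^ (2:ℝ)) < ⊤)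
    (hz : (∫⁻ x : ℝ, (‖fd x‖₊ : ℝ≥0∞) ^ (2:ℝ)) = 0) :
    ∀ x, f x = 0 := by
  have hm : AEMeasurable (fun x => (‖fd x‖₊ : ℝ≥0∞) ^ (2:ℝ)) volume :=
    (AEMeasurable.enorm hfd.aestronglyMeasurable.aemeasurable).pow_const _
  have hae : ∀ᵐ x, fd x = 0 := by
    have := (lintegral_eq_zero_iff' hm).mp hz
    filter_upwards [this] with x hx
    simp only [Pi.zero_apply] at hx
    have h2 : ((‖fd x‖₊ : ℝ≥0∞)) = 0 := by
      by_contra hne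
      rw [ENNReal.rpow_eq_zero_iff] at hx
      rcases hx with ⟨h1, _⟩ | ⟨h1, h2⟩
      · exact hne h1
      · exact ENNReal.coe_ne_top h1
    simpa using h2
  have hconst : ∀ x, f x = f 0 := by
    intro x
    have : (∫ t in (0:ℝ)..x, fd t) = 0 := by
      apply intervalIntegral.integral_congr_ae (g := fun _ => (0:ℝ)) ?_ |>.trans
      · simp
      · filter_upwards [hae] with t ht _ using ht
    have h2 := hftc x
    rw [this] at h2; linarith
  by_contra hne
  push_neg at hne
  obtain ⟨x₀, hx₀⟩ := hne
  have hc : f 0 ≠ 0 := by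
    intro h0; exact hx₀ (by rw [hconst x₀, h0])
  have : (∫⁻ x : ℝ, (‖f x‖₊ : ℝ≥0∞) ^ (2:ℝ)) = ⊤ := by
    have heq : (fun x : ℝ => (‖f x‖₊ : ℝ≥0∞) ^ (2:ℝ)) =
        fun _ => (‖f 0‖₊ : ℝ≥0∞) ^ (2:ℝ) := by
      funext x; rw [hconst x]
    rw [heq, lintegral_const]
    rw [show (volume Set.univ : ℝ≥0∞) = ⊤ from by simp, ENNReal.mul_top]
    simp only [ne_eq, ENNReal.rpow_eq_zero_iff, not_or]
    constructor
    · rintro ⟨h1, -⟩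
      exact hc (by simpa using h1)
    · rintro ⟨h1, -⟩
      exact ENNReal.coe_ne_top h1
  rw [this] at hfin
  exact lt_irrefl _ hfin

/-- A function in `H¹(𝒢)` of positive mass has positive kinetic energy. -/
lemma grid_deriv_pos_aux (u : GridFunc) (hu : u.MemH1) (hm : 0 < u.mass) :
    0 < (gridLpPow 2 u.hd u.wd).toReal := by
  obtain ⟨hch, hcw, hlh, hlw, hfh, hfw, hfin, hfin'⟩ := hu
  apply ENNReal.toReal_pos _ hfin'.ne
  intro hz
  unfold gridLpPow at hz
  rw [add_eq_zero] at hz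
  obtain ⟨hz1, hz2⟩ := hz
  rw [ENNReal.tsum_eq_zero] at hz1 hz2
  have hhz : ∀ j x, u.h j x = 0 := by
    intro j
    refine line_zero_aux (u.h j) (u.hd j) (hlh j) (hfh j) ?_ (hz1 j)
    calc (∫⁻ x : ℝ, (‖u.h j x‖₊ : ℝ≥0∞) ^ (2:ℝ))
        ≤ ∑' j : ℤ, ∫⁻ x : ℝ, (‖u.h j x‖₊ : ℝ≥0∞) ^ (2:ℝ) := ENNReal.le_tsum j
      _ ≤ gridLpPow 2 u.h u.w := le_self_add
      _ < ⊤ := hfin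
  have hwz : ∀ k y, u.w k y = 0 := by
    intro k
    refine line_zero_aux (u.w k) (u.wd k) (hlw k) (hfw k) ?_ (hz2 k)
    calc (∫⁻ y : ℝ, (‖u.w k y‖₊ : ℝ≥0∞) ^ (2:ℝ))
        ≤ ∑' k : ℤ, ∫⁻ y : ℝ, (‖u.w k y‖₊ : ℝ≥0∞) ^ (2:ℝ) := ENNReal.le_tsum k
      _ ≤ gridLpPow 2 u.h u.w := le_add_self
      _ < ⊤ := hfin
  have : u.mass = 0 := by
    unfold GridFunc.mass gridLpPow
    simp [hhz, hwz]
  rw [this] at hm; exact lt_irrefl _ hm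

end

noncomputable section

/-- **Positivity of the energy below the critical mass**: let `p ∈ [4,6]`,
let `K_p` be the optimal Gagliardo–Nirenberg constant (the least upper bound
of the quotients `Q_p(u)`), and let `μ_p = (p/(2K_p))^{2/(p−2)}` be the
critical mass. If `0 < μ ≤ μ_p` then `E_p(u) ≥ 0` for every `u ∈ H¹_μ(𝒢)`;
if moreover `μ < μ_p` then `E_p(u) > 0` for every `u ∈ H¹_μ(𝒢)`. -/
theorem grid_energy_pos_below_critical_mass (p K μ : ℝ)
    (hp : p ∈ Set.Icc (4 : ℝ) 6) (hK : IsLUB (gnSet p) K) (hμ : 0 < μ) :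
    (μ ≤ critMass p K →
      ∀ u : GridFunc, u.MemH1 → u.mass = μ → 0 ≤ u.energy p) ∧
    (μ < critMass p K →
      ∀ u : GridFunc, u.MemH1 → u.mass = μ → 0 < u.energy p) := by
  obtain ⟨hp4, hp6⟩ := hp
  have hp0 : (0:ℝ) < p := by linarith
  have hp2 : (0:ℝ) < p - 2 := by linarith
  have main : ∀ u : GridFunc, u.MemH1 → u.mass = μ →
      ∃ D P : ℝ, 0 < D ∧ 0 ≤ P ∧ P ≤ K * (μ ^ ((p-2)/2) * D) ∧
        u.energy p = 1/2 * D - 1/p * P := by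
    intro u hu hum
    have hmpos : 0 < u.mass := by rw [hum]; exact hμ
    have hD := grid_deriv_pos_aux u hu hmpos
    refine ⟨_, _, hD, ENNReal.toReal_nonneg, ?_, rfl⟩
    have hnz : u.Nonzero := by
      by_contra hz
      unfold GridFunc.Nonzero at hz
      push_neg at hz
      have hm0 : u.mass = 0 := by
        unfold GridFunc.mass gridLpPow
        simp [hz.1, hz.2]
      rw [hm0] at hmpos; exact lt_irrefl _ hmpos
    have hq : u.gnQuot p ≤ K := hK.1 ⟨u, hu, hnz, rfl⟩
    have hden : 0 < μ ^ ((p-2)/2) * (gridLpPow 2 u.hd u.wd).toReal :=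
      mul_pos (Real.rpow_pos_of_pos hμ _) hD
    unfold GridFunc.gnQuot at hq
    rw [show (gridLpPow 2 u.h u.w).toReal = μ from hum] at hq
    calc (gridLpPow p u.h u.w).toReal
        = (gridLpPow p u.h u.w).toReal /
            (μ ^ ((p-2)/2) * (gridLpPow 2 u.hd u.wd).toReal) *
            (μ ^ ((p-2)/2) * (gridLpPow 2 u.hd u.wd).toReal) := by
          field_simp
      _ ≤ K * (μ ^ ((p-2)/2) * (gridLpPow 2 u.hd u.wd).toReal) :=
          mul_le_mul_of_nonneg_right hq hden.le
  have crit_pow : 0 < K → μ ≤ critMass p K → μ ^ ((p-2)/2) ≤ p / (2*K) := by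
    intro hKpos hle
    have hbase : 0 < p / (2*K) := div_pos hp0 (by linarith)
    have h1 : μ ^ ((p-2)/2) ≤ (critMass p K) ^ ((p-2)/2) :=
      Real.rpow_le_rpow hμ.le hle (by positivity)
    have h2 : (critMass p K) ^ ((p-2)/2) = p/(2*K) := by
      unfold critMass
      rw [← Real.rpow_mul hbase.le]
      rw [show (2/(p-2)) * ((p-2)/2) = 1 from by field_simp]
      exact Real.rpow_one _
    rw [h2] at h1; exact h1
  have crit_pow' : 0 < K → μ < critMass p K → μ ^ ((p-2)/2) < p / (2*K) := by
    intro hKpos hlt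
    have hbase : 0 < p / (2*K) := div_pos hp0 (by linarith)
    have h1 : μ ^ ((p-2)/2) < (critMass p K) ^ ((p-2)/2) :=
      Real.rpow_lt_rpow hμ.le hlt (by positivity)
    have h2 : (critMass p K) ^ ((p-2)/2) = p/(2*K) := by
      unfold critMass
      rw [← Real.rpow_mul hbase.le]
      rw [show (2/(p-2)) * ((p-2)/2) = 1 from by field_simp]
      exact Real.rpow_one _
    rw [h2] at h1; exact h1
  constructor
  · intro hle u hu hum
    obtain ⟨D, P, hD, hP0, hPle, hE⟩ := main u hu hum
    rw [hE]
    have hβ : 0 < μ ^ ((p-2)/2) := Real.rpow_pos_of_pos hμ _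
    have hK0 : 0 ≤ K := by
      by_contra hKneg
      push_neg at hKneg
      have : K * (μ ^ ((p-2)/2) * D) < 0 :=
        mul_neg_of_neg_of_pos hKneg (mul_pos hβ hD)
      linarith
    rcases eq_or_lt_of_le hK0 with hK0' | hKpos
    · have hP : P = 0 := le_antisymm (by rw [← hK0'] at hPle; simpa using hPle) hP0
      rw [hP]
      have : (0:ℝ) < 1/2 * D := by linarith
      linarith
    · have hexp := crit_pow hKpos hle
      have h3 : K * μ ^ ((p-2)/2) ≤ p/2 := by
        have h := mul_le_mul_of_nonneg_left hexp hKpos.le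
        have heq : K * (p/(2*K)) = p/2 := by
          field_simp
        linarith
      have h4 : P ≤ (p/2) * D := by
        have : K * (μ ^ ((p-2)/2) * D) ≤ (p/2) * D := by
          rw [← mul_assoc]
          exact mul_le_mul_of_nonneg_right h3 hD.le
        linarith
      have h5 : (1/p) * P ≤ (1/p) * ((p/2)*D) :=
        mul_le_mul_of_nonneg_left h4 (by positivity)
      have h6 : (1/p) * ((p/2)*D) = 1/2 * D := by
        field_simp
      linarith
  · intro hlt u hu hum
    obtain ⟨D, P, hD, hP0, hPle, hE⟩ := main u hu hum
    rw [hE]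
    have hβ : 0 < μ ^ ((p-2)/2) := Real.rpow_pos_of_pos hμ _
    have hK0 : 0 ≤ K := by
      by_contra hKneg
      push_neg at hKneg
      have : K * (μ ^ ((p-2)/2) * D) < 0 :=
        mul_neg_of_neg_of_pos hKneg (mul_pos hβ hD)
      linarith
    rcases eq_or_lt_of_le hK0 with hK0' | hKpos
    · have hP : P = 0 := le_antisymm (by rw [← hK0'] at hPle; simpa using hPle) hP0
      rw [hP]
      have : (0:ℝ) < 1/2 * D := by linarith
      linarith
    · have hexp := crit_pow' hKpos hlt
      have h3 : K * μ ^ ((p-2)/2) < p/2 := by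
        have h := mul_lt_mul_of_pos_left hexp hKpos
        have heq : K * (p/(2*K)) = p/2 := by
          field_simp
        linarith
      have h4 : P < (p/2) * D := by
        have : K * (μ ^ ((p-2)/2) * D) < (p/2) * D := by
          rw [← mul_assoc]
          exact mul_lt_mul_of_pos_right h3 hD
        linarith
      have h5 : (1/p) * P < (1/p) * ((p/2)*D) :=
        mul_lt_mul_of_pos_left h4 (by positivity)
      have h6 : (1/p) * ((p/2)*D) = 1/2 * D := by
        field_simp
      linarith


end
end

section
/- Supercritical collapse: for every real p > 6 and every μ > 0, the NLS energy E_p is unbounded from below on H¹_μ(𝒢), i.e., ℰ_p(μ) = −∞. -/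
/- Formalization of NLS ground states on the two-dimensional grid 𝒢
   (the planar metric graph with vertex set ℤ×ℤ and unit edges).

   A function `u` on 𝒢 is encoded by the family `h j` of its restrictions to
   the horizontal lines `H j` and the family `w k` of its restrictions to the
   vertical lines `V k`, subject to the vertex-compatibility conditions
   `h j k = w k j`.  The (weak) derivative of `u` along each line is carried
   as additional data `hd`, `wd`, tied to `h`, `w` by the fundamental theorem
   of calculus in the membership predicates below. -/

open MeasureTheory Filter Topology
open scoped ENNReal NNReal

namespace GridCollapse

noncomputable section

open Real MeasureTheory Set
open scoped ENNReal NNReal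

noncomputable def phi (x : ℝ) : ℝ := Real.sin (π * min 1 (max 0 x))

noncomputable def phid (x : ℝ) : ℝ :=
  if x ∈ Set.Ioo (0:ℝ) 1 then π * Real.cos (π * x) else 0

lemma phi_cont : Continuous phi := by unfold phi; fun_prop

lemma phi_of_nonpos {x : ℝ} (hx : x ≤ 0) : phi x = 0 := by
  simp [phi, max_eq_left hx, min_eq_right (zero_le_one (α := ℝ))]

lemma phi_of_one_le {x : ℝ} (hx : 1 ≤ x) : phi x = 0 := by
  have h0 : max 0 x = x := max_eq_right (le_trans zero_le_one hx)
  simp [phi, h0, min_eq_left hx]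

lemma phi_eq {x : ℝ} (hx : x ∈ Icc (0:ℝ) 1) : phi x = Real.sin (π * x) := by
  rw [phi, max_eq_right hx.1, min_eq_right hx.2]

lemma phi_zero : phi 0 = 0 := phi_of_nonpos le_rfl

lemma phi_nonneg (x : ℝ) : 0 ≤ phi x := by
  apply Real.sin_nonneg_of_nonneg_of_le_pi
  · positivity
  · have h1 : min 1 (max 0 x) ≤ 1 := min_le_left _ _
    calc π * min 1 (max 0 x) ≤ π * 1 := by nlinarith [Real.pi_pos]
      _ = π := mul_one π

lemma phi_supp {x : ℝ} (hx : x ∉ Icc (0:ℝ) 1) : phi x = 0 := by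
  rcases lt_or_ge x 0 with h | h
  · exact phi_of_nonpos h.le
  · rcases le_or_gt x 1 with h1 | h1
    · exact absurd ⟨h, h1⟩ hx
    · exact phi_of_one_le h1.le

lemma phi_int_zero (k : ℤ) {l : ℝ} (hl : 1 ≤ l) : phi (l * k) = 0 := by
  rcases le_or_gt (k : ℝ) 0 with h | h
  · exact phi_of_nonpos (mul_nonpos_of_nonneg_of_nonpos (by linarith) h)
  · have hk : (1:ℝ) ≤ k := by exact_mod_cast h
    exact phi_of_one_le (by nlinarith)

lemma phid_eq_indicator :
    phid = (Ioo (0:ℝ) 1).indicator (fun x => π * Real.cos (π * x)) := by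
  funext x; by_cases hx : x ∈ Ioo (0:ℝ) 1 <;> simp [phid, hx]

lemma phid_integrable : Integrable phid := by
  rw [phid_eq_indicator, integrable_indicator_iff measurableSet_Ioo]
  exact ((Continuous.integrableOn_Icc (by fun_prop))).mono_set Ioo_subset_Icc_self

lemma phi_hasDeriv {x : ℝ} (hx : x ∈ Ioo (0:ℝ) 1) : HasDerivAt phi (phid x) x := by
  have h1 : HasDerivAt (fun y : ℝ => Real.sin (π * y)) (π * Real.cos (π * x)) x := by
    have h0 := (Real.hasDerivAt_sin (π * x)).comp x ((hasDerivAt_id x).const_mul π)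
    have : (Real.sin ∘ fun y : ℝ => π * y) = fun y : ℝ => Real.sin (π * y) := rfl
    rw [this] at h0
    simpa [mul_comm] using h0
  have h2 : (fun y : ℝ => Real.sin (π * y)) =ᶠ[nhds x] phi := by
    filter_upwards [Ioo_mem_nhds hx.1 hx.2] with y hy
    exact (phi_eq (Ioo_subset_Icc_self hy)).symm
  have h3 := h1.congr_of_eventuallyEq h2.symm
  simpa [phid, hx] using h3

lemma ftc01 {x : ℝ} (hx : x ∈ Icc (0:ℝ) 1) : ∫ t in (0:ℝ)..x, phid t = phi x := by
  have h := intervalIntegral.integral_eq_sub_of_hasDeriv_right_of_le hx.1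
    (phi_cont.continuousOn)
    (fun t ht => (phi_hasDeriv ⟨ht.1, lt_of_lt_of_le ht.2 hx.2⟩).hasDerivWithinAt)
    (phid_integrable.intervalIntegrable)
  rw [h, phi_zero, sub_zero]

lemma ftc (x : ℝ) : ∫ t in (0:ℝ)..x, phid t = phi x := by
  rcases le_or_gt x 0 with h | h
  · have he : EqOn phid 0 (uIcc (0:ℝ) x) := by
      intro t ht
      rw [uIcc_of_ge h] at ht
      have : ¬ (t ∈ Ioo (0:ℝ) 1) := fun hc => absurd (lt_of_lt_of_le hc.1 ht.2) (lt_irrefl 0)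
      simp [phid, this]
    rw [intervalIntegral.integral_congr he, phi_of_nonpos h]
    simp
  · rcases le_or_gt x 1 with h1 | h1
    · exact ftc01 ⟨h.le, h1⟩
    · have hi1 : IntervalIntegrable phid volume 0 1 := phid_integrable.intervalIntegrable
      have hi2 : IntervalIntegrable phid volume 1 x := phid_integrable.intervalIntegrable
      rw [← intervalIntegral.integral_add_adjacent_intervals hi1 hi2]
      have he : EqOn phid 0 (uIcc (1:ℝ) x) := by
        intro t ht
        rw [uIcc_of_le h1.le] at ht
        have : ¬ (t ∈ Ioo (0:ℝ) 1) := fun hc => absurd (lt_of_le_of_lt ht.1 hc.2) (lt_irrefl 1)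
        simp [phid, this]
      rw [intervalIntegral.integral_congr he, ftc01 ⟨zero_le_one, le_rfl⟩,
        phi_of_one_le le_rfl, phi_of_one_le h1.le]
      simp


noncomputable def Jq (q : ℝ) : ℝ := ∫ x, |phi x| ^ q

noncomputable def Kd : ℝ := ∫ x, |phid x| ^ (2:ℝ)

lemma Jq_nonneg (q : ℝ) : 0 ≤ Jq q :=
  integral_nonneg fun x => Real.rpow_nonneg (abs_nonneg _) _

lemma Kd_nonneg : 0 ≤ Kd :=
  integral_nonneg fun x => Real.rpow_nonneg (abs_nonneg _) _

lemma pow_cont {q : ℝ} (hq : 0 ≤ q) : Continuous fun x => |phi x| ^ q :=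
  Continuous.rpow_const phi_cont.abs fun _ => Or.inr hq

lemma Jq_integrable {q : ℝ} (hq : 0 < q) : Integrable fun x => |phi x| ^ q := by
  apply (pow_cont hq.le).integrable_of_hasCompactSupport
  apply HasCompactSupport.intro (isCompact_Icc (a := (0:ℝ)) (b := 1))
  intro x hx
  rw [phi_supp hx, abs_zero, Real.zero_rpow hq.ne']

lemma Kd_integrable : Integrable fun x => |phid x| ^ (2:ℝ) := by
  have he : (fun x => |phid x| ^ (2:ℝ))
      = (Ioo (0:ℝ) 1).indicator fun x => |π * Real.cos (π * x)| ^ (2:ℝ) := by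
    funext x
    by_cases hx : x ∈ Ioo (0:ℝ) 1 <;>
      simp [phid, hx, Real.zero_rpow (two_ne_zero (α := ℝ))]
  rw [he, integrable_indicator_iff measurableSet_Ioo]
  refine (Continuous.integrableOn_Icc ?_).mono_set Ioo_subset_Icc_self
  exact Continuous.rpow_const (by fun_prop) fun _ => Or.inr (by norm_num)

lemma Jq_pos {q : ℝ} (hq : 0 < q) : 0 < Jq q := by
  rw [Jq, integral_pos_iff_support_of_nonneg
    (fun x => Real.rpow_nonneg (abs_nonneg _) _) (Jq_integrable hq)]
  have hsub : Ioo (0:ℝ) 1 ⊆ Function.support fun x => |phi x| ^ q := by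
    intro x hx
    have hphi : 0 < phi x := by
      rw [phi_eq (Ioo_subset_Icc_self hx)]
      exact Real.sin_pos_of_pos_of_lt_pi (by nlinarith [Real.pi_pos, hx.1])
        (by nlinarith [Real.pi_pos, hx.2])
    have : 0 < |phi x| ^ q := Real.rpow_pos_of_pos (abs_pos.2 hphi.ne') q
    exact this.ne'
  calc (0:ℝ≥0∞) < volume (Ioo (0:ℝ) 1) := by simp
    _ ≤ _ := measure_mono hsub

lemma lint_eq {q : ℝ} (hq : 0 < q) (f : ℝ → ℝ) (hf : Integrable fun x => |f x| ^ q) :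
    ∫⁻ x, (‖f x‖₊ : ℝ≥0∞) ^ q = ENNReal.ofReal (∫ x, |f x| ^ q) := by
  rw [ofReal_integral_eq_lintegral_ofReal hf
    (Filter.Eventually.of_forall fun x => Real.rpow_nonneg (abs_nonneg _) _)]
  refine lintegral_congr fun x => ?_
  rw [← enorm_eq_nnnorm, Real.enorm_eq_ofReal_abs, ENNReal.ofReal_rpow_of_nonneg (abs_nonneg _) hq.le]

lemma scaled_int (f : ℝ → ℝ) (q a : ℝ) {l : ℝ} (hl : 0 < l) :
    ∫ x, |a * f (l * x)| ^ q = |a| ^ q * (l⁻¹ * ∫ x, |f x| ^ q) := by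
  have h1 : ∀ y, |a * f y| ^ q = |a| ^ q * |f y| ^ q := fun y => by
    rw [abs_mul, Real.mul_rpow (abs_nonneg _) (abs_nonneg _)]
  calc ∫ x, |a * f (l * x)| ^ q
      = ∫ x, (fun y => |a * f y| ^ q) (l * x) := rfl
    _ = |l⁻¹| • ∫ y, |a * f y| ^ q := by
        exact Measure.integral_comp_mul_left (fun y => |a * f y| ^ q) l
    _ = l⁻¹ * ∫ y, |a| ^ q * |f y| ^ q := by
        rw [abs_of_nonneg (inv_nonneg.2 hl.le), smul_eq_mul]
        simp_rw [h1]
    _ = |a| ^ q * (l⁻¹ * ∫ y, |f y| ^ q) := by rw [integral_const_mul]; ring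

lemma scaled_integrable (f : ℝ → ℝ) (q a : ℝ) {l : ℝ} (hl : l ≠ 0)
    (hf : Integrable fun x => |f x| ^ q) :
    Integrable fun x => |a * f (l * x)| ^ q := by
  have he : (fun x => |a * f (l * x)| ^ q)
      = fun x => |a| ^ q * (fun y => |f y| ^ q) (l * x) := funext fun x => by
    simp only [abs_mul, Real.mul_rpow (abs_nonneg _) (abs_nonneg _)]
  rw [he]
  exact (hf.comp_mul_left' hl).const_mul _


noncomputable def testFun (a : ℝ) {l : ℝ} (hl : 1 ≤ l) : GridFunc where
  h := fun j x => if j = 0 then a * phi (l * x) else 0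
  w := fun _ _ => 0
  hd := fun j x => if j = 0 then a * l * phid (l * x) else 0
  wd := fun _ _ => 0
  compat := fun j k => by
    by_cases hj : j = 0 <;> simp [hj, phi_int_zero k hl]

variable {a l : ℝ}

lemma testFun_lp {q : ℝ} (hq : 0 < q) (ha : 0 ≤ a) (hl : 1 ≤ l) :
    gridLpPow q (testFun a hl).h (testFun a hl).w
      = ENNReal.ofReal (a ^ q * (l⁻¹ * Jq q)) := by
  have hl0 : (0:ℝ) < l := lt_of_lt_of_le one_pos hl
  have hi := scaled_integrable phi q a hl0.ne' (Jq_integrable hq)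
  have h2 : (∑' k : ℤ, ∫⁻ y : ℝ, (‖(testFun a hl).w k y‖₊ : ℝ≥0∞) ^ q) = 0 := by
    simp [testFun, ENNReal.zero_rpow_of_pos hq]
  have h1 : (∑' j : ℤ, ∫⁻ x : ℝ, (‖(testFun a hl).h j x‖₊ : ℝ≥0∞) ^ q)
      = ∫⁻ x, (‖a * phi (l * x)‖₊ : ℝ≥0∞) ^ q := by
    rw [tsum_eq_single (0 : ℤ)]
    · simp [testFun]
    · intro j hj; simp [testFun, hj, ENNReal.zero_rpow_of_pos hq]
  rw [gridLpPow, h1, h2, add_zero, lint_eq hq _ hi, scaled_int phi q a hl0,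
    abs_of_nonneg ha, Jq]

lemma testFun_lpd (ha : 0 ≤ a) (hl : 1 ≤ l) :
    gridLpPow 2 (testFun a hl).hd (testFun a hl).wd
      = ENNReal.ofReal ((a * l) ^ (2:ℝ) * (l⁻¹ * Kd)) := by
  have hl0 : (0:ℝ) < l := lt_of_lt_of_le one_pos hl
  have hi := scaled_integrable phid 2 (a * l) hl0.ne' Kd_integrable
  have h2 : (∑' k : ℤ, ∫⁻ y : ℝ, (‖(testFun a hl).wd k y‖₊ : ℝ≥0∞) ^ (2:ℝ)) = 0 := by
    simp [testFun, ENNReal.zero_rpow_of_pos (two_pos (α := ℝ))]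
  have h1 : (∑' j : ℤ, ∫⁻ x : ℝ, (‖(testFun a hl).hd j x‖₊ : ℝ≥0∞) ^ (2:ℝ))
      = ∫⁻ x, (‖a * l * phid (l * x)‖₊ : ℝ≥0∞) ^ (2:ℝ) := by
    rw [tsum_eq_single (0 : ℤ)]
    · simp [testFun]
    · intro j hj; simp [testFun, hj, ENNReal.zero_rpow_of_pos (two_pos (α := ℝ))]
  rw [gridLpPow, h1, h2, add_zero, lint_eq two_pos _ hi, scaled_int phid 2 (a * l) hl0,
    abs_of_nonneg (mul_nonneg ha hl0.le), Kd]

lemma testFun_memH1 (ha : 0 ≤ a) (hl : 1 ≤ l) : (testFun a hl).MemH1 := by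
  have hl0 : (0:ℝ) < l := lt_of_lt_of_le one_pos hl
  refine ⟨?_, ?_, ?_, ?_, ?_, ?_, ?_, ?_⟩
  · intro j
    by_cases hj : j = 0 <;> simp only [testFun, hj, if_true, if_false]
    · exact continuous_const.mul (phi_cont.comp (continuous_const.mul continuous_id))
    · exact continuous_const
  · intro k; exact continuous_const
  · intro j
    by_cases hj : j = 0 <;> simp only [testFun, hj, if_true, if_false]
    · exact ((phid_integrable.comp_mul_left' hl0.ne').const_mul (a * l)).locallyIntegrable
    · exact locallyIntegrable_const 0
  · intro k; exact locallyIntegrable_const 0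
  · intro j x
    by_cases hj : j = 0 <;> simp only [testFun, hj, if_true, if_false]
    · have h1 : ∫ t in (0:ℝ)..x, a * l * phid (l * t)
          = (a * l) * ∫ t in (0:ℝ)..x, phid (l * t) := by
        rw [intervalIntegral.integral_const_mul]
      have h2 : ∫ t in (0:ℝ)..x, phid (l * t)
          = l⁻¹ • ∫ t in (l * 0)..(l * x), phid t :=
        intervalIntegral.integral_comp_mul_left phid hl0.ne'
      rw [h1, h2, mul_zero, ftc (l * x), phi_zero, mul_zero, smul_eq_mul]
      field_simp
      ring
    · simp
  · intro k y; simp [testFun]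
  · rw [testFun_lp two_pos ha hl]; exact ENNReal.ofReal_lt_top
  · rw [testFun_lpd ha hl]; exact ENNReal.ofReal_lt_top

lemma testFun_mass (ha : 0 ≤ a) (hl : 1 ≤ l) :
    (testFun a hl).mass = a ^ (2:ℝ) * (l⁻¹ * Jq 2) := by
  have hl0 : (0:ℝ) < l := lt_of_lt_of_le one_pos hl
  rw [GridFunc.mass, testFun_lp two_pos ha hl, ENNReal.toReal_ofReal]
  exact mul_nonneg (Real.rpow_nonneg ha _)
    (mul_nonneg (inv_nonneg.2 hl0.le) (Jq_nonneg 2))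

lemma testFun_energy {p : ℝ} (hp : 0 < p) (ha : 0 ≤ a) (hl : 1 ≤ l) :
    (testFun a hl).energy p
      = 1 / 2 * ((a * l) ^ (2:ℝ) * (l⁻¹ * Kd)) - 1 / p * (a ^ p * (l⁻¹ * Jq p)) := by
  have hl0 : (0:ℝ) < l := lt_of_lt_of_le one_pos hl
  rw [GridFunc.energy, testFun_lpd ha hl, testFun_lp hp ha hl,
    ENNReal.toReal_ofReal, ENNReal.toReal_ofReal]
  · exact mul_nonneg (Real.rpow_nonneg ha _)
      (mul_nonneg (inv_nonneg.2 hl0.le) (Jq_nonneg p))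
  · exact mul_nonneg (Real.rpow_nonneg (mul_nonneg ha hl0.le) _)
      (mul_nonneg (inv_nonneg.2 hl0.le) Kd_nonneg)

end

end GridCollapse

noncomputable section

/-- **Supercritical collapse**: for every `p > 6` and every `μ > 0`, the NLS
energy `E_p` is unbounded from below on `H¹_μ(𝒢)`, i.e. `ℰ_p(μ) = −∞`. -/
theorem grid_supercritical_collapse (p μ : ℝ) (hp : 6 < p) (hμ : 0 < μ) :
    ∀ c : ℝ, ∃ u : GridFunc, u.MemH1 ∧ u.mass = μ ∧ u.energy p < c := by
  intro c
  have hp0 : (0:ℝ) < p := by linarith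
  have hm : 0 < GridCollapse.Jq 2 := GridCollapse.Jq_pos two_pos
  have hP : 0 < GridCollapse.Jq p := GridCollapse.Jq_pos hp0
  have hK0 : 0 ≤ GridCollapse.Kd := GridCollapse.Kd_nonneg
  set C1 : ℝ := μ * GridCollapse.Kd / (2 * GridCollapse.Jq 2) with hC1def
  have hC1 : 0 ≤ C1 := by positivity
  set C2 : ℝ := 1 / p * ((μ / GridCollapse.Jq 2) ^ (p / 2) * GridCollapse.Jq p) with hC2def
  have hC2 : 0 < C2 :=
    mul_pos (by positivity) (mul_pos (Real.rpow_pos_of_pos (div_pos hμ hm) _) hP)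
  set s : ℝ := p / 2 - 3 with hsdef
  have hs0 : 0 < s := by rw [hsdef]; linarith
  set l : ℝ := max 1 (((C1 + |c| + 1) / C2) ^ s⁻¹) with hldef
  have hl1 : 1 ≤ l := le_max_left _ _
  have hl0 : (0:ℝ) < l := lt_of_lt_of_le one_pos hl1
  have hls : C1 + |c| + 1 ≤ C2 * l ^ s := by
    have hbpos : 0 ≤ (C1 + |c| + 1) / C2 := by positivity
    have h1 : ((C1 + |c| + 1) / C2) = (((C1 + |c| + 1) / C2) ^ s⁻¹) ^ s :=
      (Real.rpow_inv_rpow hbpos hs0.ne').symm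
    have h2 : ((C1 + |c| + 1) / C2) ≤ l ^ s := by
      rw [h1]
      exact Real.rpow_le_rpow (Real.rpow_nonneg hbpos _) (le_max_right _ _) hs0.le
    calc C1 + |c| + 1 = C2 * ((C1 + |c| + 1) / C2) := by field_simp
      _ ≤ C2 * l ^ s := mul_le_mul_of_nonneg_left h2 hC2.le
  set a : ℝ := Real.sqrt (μ * l / GridCollapse.Jq 2) with hadef
  have ha : 0 ≤ a := Real.sqrt_nonneg _
  have ha2 : a ^ (2:ℝ) = μ * l / GridCollapse.Jq 2 := by
    rw [hadef, show (2:ℝ) = ((2:ℕ):ℝ) by norm_num, Real.rpow_natCast,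
      Real.sq_sqrt (by positivity)]
  have hap : a ^ p = (μ / GridCollapse.Jq 2) ^ (p / 2) * l ^ (p / 2) := by
    rw [hadef, Real.sqrt_eq_rpow, ← Real.rpow_mul (by positivity),
      show μ * l / GridCollapse.Jq 2 = (μ / GridCollapse.Jq 2) * l by ring,
      Real.mul_rpow (by positivity) hl0.le, one_div_mul_eq_div]
  refine ⟨GridCollapse.testFun a hl1, GridCollapse.testFun_memH1 ha hl1, ?_, ?_⟩
  · rw [GridCollapse.testFun_mass ha hl1, ha2]
    field_simp
  · rw [GridCollapse.testFun_energy hp0 ha hl1]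
    have hl2 : l ^ (2:ℝ) = l ^ (2:ℕ) := by
      rw [show (2:ℝ) = ((2:ℕ):ℝ) by norm_num, Real.rpow_natCast]
    have key : 1 / 2 * ((a * l) ^ (2:ℝ) * (l⁻¹ * GridCollapse.Kd))
        - 1 / p * (a ^ p * (l⁻¹ * GridCollapse.Jq p))
        = C1 * l ^ (2:ℕ) - C2 * (l ^ (2:ℕ) * l ^ s) := by
      have h1 : (a * l) ^ (2:ℝ) = a ^ (2:ℝ) * l ^ (2:ℝ) := Real.mul_rpow ha hl0.le
      have h3 : l ^ (p / 2) = l ^ (2:ℕ) * (l ^ s * l) := by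
        have he : l ^ (p / 2) = l ^ ((2:ℝ) + (s + 1)) := by
          congr 1
          rw [hsdef]; ring
        rw [he, Real.rpow_add hl0, Real.rpow_add hl0, Real.rpow_one, hl2]
      rw [h1, ha2, hap, hl2, h3, hC1def, hC2def]
      field_simp
    rw [key]
    have hl2' : (1:ℝ) ≤ l ^ (2:ℕ) := by nlinarith
    have ht : C1 - C2 * l ^ s ≤ -|c| - 1 := by linarith
    calc C1 * l ^ (2:ℕ) - C2 * (l ^ (2:ℕ) * l ^ s)
        = l ^ (2:ℕ) * (C1 - C2 * l ^ s) := by ring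
      _ ≤ 1 * (C1 - C2 * l ^ s) := by
          apply mul_le_mul_of_nonpos_right hl2'
          have := abs_nonneg c
          linarith
      _ = C1 - C2 * l ^ s := one_mul _
      _ ≤ -|c| - 1 := ht
      _ < c := by linarith [neg_abs_le c]


end
end
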